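/- arXiv:2311.03962 — 5 statements merged into one kernel-verified Lean document; each statement's English description precedes it below -/
import Mathlib

section
/- Let F be a finite field of characteristic 2 with F ≠ F₂, and let V be an inner product space over F. Then any two orthogonal bases of V are chain equivalent over F. -/
open Function TensorProduct

/-- `(V, B)` is an inner product space over the commutative ring `R`: `V` is a
finite rank free `R`-module and `B` is a non-degenerate symmetric bilinear form on `V`
(non-degenerate: the induced map `V → Hom_R(V, R)` is bijective). -/
structure IsInnerProductSpace (R : Type*) [CommRing R] (V : Type*) [AddCommGroup V]
    [Module R V] (B : LinearMap.BilinForm R V) : Prop where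
  free : Module.Free R V
  finite : Module.Finite R V
  symm : ∀ x y, B x y = B y x
  nondegenerate : Function.Bijective B

section IPSDefs

variable {R : Type*} [CommRing R] {V : Type*} [AddCommGroup V] [Module R V]

/-- A basis `b` of `V` is an orthogonal basis for the bilinear form `B` if
`B (b i) (b j) = 0` for all `i ≠ j`. -/
def IsOrthoBasis {n : ℕ} (B : LinearMap.BilinForm R V) (b : Module.Basis (Fin n) R V) : Prop :=
  ∀ i j, i ≠ j → B (b i) (b j) = 0

/-- Two orthogonal bases `b`, `c` of `V` are chain equivalent if there is a sequence
`s 0, …, s r` of orthogonal bases of `V` with `s 0 = b`, `s r = c` and consecutive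
bases sharing at least `n - 2` basis vectors. -/
def ChainEquiv {n : ℕ} (B : LinearMap.BilinForm R V) (b c : Module.Basis (Fin n) R V) : Prop :=
  ∃ (r : ℕ) (s : Fin (r + 1) → Module.Basis (Fin n) R V),
    (∀ i, IsOrthoBasis B (s i)) ∧ s 0 = b ∧ s (Fin.last r) = c ∧
    ∀ i : Fin r, n - 2 ≤ (Set.range (s i.castSucc) ∩ Set.range (s i.succ)).ncard

end IPSDefs

section ChainProof
open Set
variable {F : Type*} [Field F] {V : Type*} [AddCommGroup V] [Module F V] {n : ℕ}

def MyStep (B : LinearMap.BilinForm F V) (b c : Module.Basis (Fin n) F V) : Prop :=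
  IsOrthoBasis B b ∧ IsOrthoBasis B c ∧ n - 2 ≤ (Set.range b ∩ Set.range c).ncard

lemma myNcardRange (b : Module.Basis (Fin n) F V) : (Set.range ⇑b).ncard = n := by
  rw [← Set.image_univ, Set.ncard_image_of_injective _ b.injective, Set.ncard_univ,
    Nat.card_eq_fintype_card, Fintype.card_fin]

lemma myStepCard {b b' : Module.Basis (Fin n) F V} (i j : Fin n)
    (h : ∀ x, x ≠ i → x ≠ j → b' x = b x) :
    n - 2 ≤ (Set.range ⇑b ∩ Set.range ⇑b').ncard := by
  have hsub : ⇑b '' ({i, j} : Set (Fin n))ᶜ ⊆ Set.range ⇑b ∩ Set.range ⇑b' := by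
    rintro - ⟨x, hx, rfl⟩
    simp only [Set.mem_compl_iff, Set.mem_insert_iff, Set.mem_singleton_iff, not_or] at hx
    exact ⟨Set.mem_range_self x, ⟨x, h x hx.1 hx.2⟩⟩
  have h1 : (({i, j} : Set (Fin n))ᶜ).ncard = n - ({i, j} : Set (Fin n)).ncard := by
    have := Set.ncard_add_ncard_compl ({i, j} : Set (Fin n))
    rw [Nat.card_eq_fintype_card, Fintype.card_fin] at this
    omega
  have h2 : ({i, j} : Set (Fin n)).ncard ≤ 2 := by
    apply le_trans (Set.ncard_insert_le _ _); simp
  calc n - 2 ≤ n - ({i, j} : Set (Fin n)).ncard := by omega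
    _ = (⇑b '' ({i, j} : Set (Fin n))ᶜ).ncard := by
        rw [Set.ncard_image_of_injective _ b.injective, h1]
    _ ≤ _ := Set.ncard_le_ncard hsub (Set.toFinite _)

lemma myDiagNeZero {B : LinearMap.BilinForm F V} (hinj : Function.Injective ⇑B)
    {b : Module.Basis (Fin n) F V} (hb : IsOrthoBasis B b) (i : Fin n) : B (b i) (b i) ≠ 0 := by
  intro h
  have hmap : B (b i) = 0 := by
    apply b.ext
    intro j
    rcases eq_or_ne i j with rfl | hij
    · simpa using h
    · simpa using hb i j hij
  have : b i = 0 := hinj (by simpa using hmap)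
  exact b.ne_zero i this

lemma myPerp {B : LinearMap.BilinForm F V} (hinj : Function.Injective ⇑B)
    {b : Module.Basis (Fin n) F V} {v : V} (h : ∀ i, B v (b i) = 0) : v = 0 := by
  apply hinj
  apply b.ext
  intro j
  rw [map_zero, LinearMap.zero_apply]
  exact h j

lemma myPairBasis (b : Module.Basis (Fin n) F V) {i j : Fin n} (hij : i ≠ j)
    (p q r s : F) (hdet : p * s - q * r ≠ 0) :
    ∃ b' : Module.Basis (Fin n) F V,
      b' i = p • b i + q • b j ∧ b' j = r • b i + s • b j ∧
      ∀ x, x ≠ i → x ≠ j → b' x = b x := by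
  classical
  set Δ := p * s - q * r with hΔ
  set f : Fin n → V := fun x =>
    if x = i then p • b i + q • b j else if x = j then r • b i + s • b j else b x with hf
  have hfi : f i = p • b i + q • b j := by simp [hf]
  have hfj : f j = r • b i + s • b j := by simp [hf, hij.symm]
  have hfx : ∀ x, x ≠ i → x ≠ j → f x = b x := by
    intro x h1 h2; simp [hf, h1, h2]
  have hbi : b i = (s / Δ) • f i - (q / Δ) • f j := by
    rw [hfi, hfj]
    match_scalars
    · field_simp; ring
    · field_simp; ring
  have hbj : b j = (p / Δ) • f j - (r / Δ) • f i := by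
    rw [hfi, hfj]
    match_scalars
    · field_simp; ring
    · field_simp; ring
  have hspan : ⊤ ≤ Submodule.span F (Set.range f) := by
    rw [← b.span_eq]
    apply Submodule.span_le.2
    rintro - ⟨x, rfl⟩
    have memf : ∀ y, f y ∈ Submodule.span F (Set.range f) :=
      fun y => Submodule.subset_span ⟨y, rfl⟩
    by_cases h1 : x = i
    · rw [h1, hbi]
      exact Submodule.sub_mem _ (Submodule.smul_mem _ _ (memf i)) (Submodule.smul_mem _ _ (memf j))
    by_cases h2 : x = j
    · rw [h2, hbj]
      exact Submodule.sub_mem _ (Submodule.smul_mem _ _ (memf j)) (Submodule.smul_mem _ _ (memf i))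
    · rw [← hfx x h1 h2]; exact memf x
  have hcard : Fintype.card (Fin n) = Module.finrank F V := by
    haveI := Module.Finite.of_basis b
    rw [Module.finrank_eq_card_basis b]
  refine ⟨basisOfTopLeSpanOfCardEqFinrank f hspan hcard, ?_, ?_, ?_⟩ <;>
    simp only [coe_basisOfTopLeSpanOfCardEqFinrank]
  · exact hfi
  · exact hfj
  · exact hfx

lemma myPairMove {B : LinearMap.BilinForm F V} (hsymm : ∀ x y, B x y = B y x)
    {b : Module.Basis (Fin n) F V} (hb : IsOrthoBasis B b) {i j : Fin n} (hij : i ≠ j)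
    (p q r s : F) (hdet : p * s - q * r ≠ 0)
    (horth : p * r * B (b i) (b i) + q * s * B (b j) (b j) = 0) :
    ∃ b' : Module.Basis (Fin n) F V, MyStep B b b' ∧
      b' i = p • b i + q • b j ∧ b' j = r • b i + s • b j ∧
      ∀ x, x ≠ i → x ≠ j → b' x = b x := by
  obtain ⟨b', hi, hj, hx⟩ := myPairBasis b hij p q r s hdet
  have hBij : B (b' i) (b' j) = 0 := by
    rw [hi, hj]
    simp only [map_add, map_smul, LinearMap.add_apply, LinearMap.smul_apply, smul_eq_mul]
    rw [hb i j hij, hb j i hij.symm]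
    linear_combination horth
  have hB0 : ∀ z, z ≠ i → z ≠ j →
      B (b' i) (b' z) = 0 ∧ B (b' j) (b' z) = 0 ∧ B (b' z) (b' i) = 0 ∧ B (b' z) (b' j) = 0 := by
    intro z hzi hzj
    rw [hi, hj, hx z hzi hzj]
    simp only [map_add, map_smul, LinearMap.add_apply, LinearMap.smul_apply, smul_eq_mul]
    rw [hb i z (Ne.symm hzi), hb j z (Ne.symm hzj), hb z i hzi, hb z j hzj]
    refine ⟨by ring, by ring, by ring, by ring⟩
  have hortho : IsOrthoBasis B b' := by
    intro x y hxy
    rcases eq_or_ne x i with rfl | hxi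
    · rcases eq_or_ne y j with rfl | hyj
      · exact hBij
      · exact (hB0 y (Ne.symm hxy) hyj).1
    rcases eq_or_ne x j with rfl | hxj
    · rcases eq_or_ne y i with rfl | hyi
      · rw [hsymm]; exact hBij
      · exact (hB0 y hyi (Ne.symm hxy)).2.1
    rcases eq_or_ne y i with rfl | hyi
    · exact (hB0 x hxi hxj).2.2.1
    rcases eq_or_ne y j with rfl | hyj
    · exact (hB0 x hxi hxj).2.2.2
    · rw [hx x hxi hxj, hx y hyi hyj]; exact hb x y hxy
  exact ⟨b', ⟨hb, hortho, myStepCard i j hx⟩, hi, hj, hx⟩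

lemma myMergeMove [CharP F 2] {B : LinearMap.BilinForm F V} (hsymm : ∀ x y, B x y = B y x)
    {b : Module.Basis (Fin n) F V} (hb : IsOrthoBasis B b) (v : V) {i j : Fin n} (hij : i ≠ j)
    (hcross : (B v (b i))^2 * B (b j) (b j) ≠ (B v (b j))^2 * B (b i) (b i)) :
    ∃ b' : Module.Basis (Fin n) F V, MyStep B b b' ∧
      B v (b' i) ≠ 0 ∧ B v (b' j) = 0 ∧ ∀ x, x ≠ i → x ≠ j → b' x = b x := by
  have h2 : (2 : F) = 0 := CharTwo.two_eq_zero
  set μi := B v (b i) with hμi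
  set μj := B v (b j) with hμj
  set di := B (b i) (b i) with hdi
  set dj := B (b j) (b j) with hdj
  have hdet : (μi * dj) * μi - (μj * di) * μj ≠ 0 := by
    intro h
    apply hcross
    linear_combination h
  obtain ⟨b', hstep, hi', hj', hx⟩ :=
    myPairMove hsymm hb hij (μi * dj) (μj * di) μj μi hdet
      (by linear_combination (μi * μj * di * dj) * h2)
  refine ⟨b', hstep, ?_, ?_, hx⟩
  · rw [hi']
    simp only [map_add, map_smul, smul_eq_mul]
    intro h
    apply hdet
    linear_combination h - (μj * μj * di) * h2
  · rw [hj']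
    simp only [map_add, map_smul, smul_eq_mul]
    linear_combination (μi * μj) * h2

lemma myGrowMove [CharP F 2] {B : LinearMap.BilinForm F V} (hsymm : ∀ x y, B x y = B y x)
    {b : Module.Basis (Fin n) F V} (hb : IsOrthoBasis B b) (v : V) {i j : Fin n} (hij : i ≠ j)
    {y : F} (hD : B (b i) (b i) + y^2 * B (b j) (b j) ≠ 0) (hμj : B v (b j) = 0) :
    ∃ b' : Module.Basis (Fin n) F V, MyStep B b b' ∧
      B v (b' i) = B v (b i) ∧
      B v (b' j) = y * B (b j) (b j) * B v (b i) ∧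
      B (b' i) (b' i) = B (b i) (b i) + y^2 * B (b j) (b j) ∧
      B (b' j) (b' j) =
        B (b i) (b i) * B (b j) (b j) * (B (b i) (b i) + y^2 * B (b j) (b j)) ∧
      ∀ x, x ≠ i → x ≠ j → b' x = b x := by
  have h2 : (2 : F) = 0 := CharTwo.two_eq_zero
  set di := B (b i) (b i) with hdi
  set dj := B (b j) (b j) with hdj
  have hdet : (1 : F) * di - y * (y * dj) ≠ 0 := by
    intro h
    apply hD
    linear_combination h + (y^2 * dj) * h2
  obtain ⟨b', hstep, hi', hj', hx⟩ :=
    myPairMove hsymm hb hij 1 y (y * dj) di hdet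
      (by linear_combination (y * di * dj) * h2)
  have hbij : B (b i) (b j) = 0 := hb i j hij
  have hbji : B (b j) (b i) = 0 := hb j i hij.symm
  refine ⟨b', hstep, ?_, ?_, ?_, ?_, hx⟩
  · rw [hi']
    simp only [map_add, map_smul, smul_eq_mul]
    rw [hμj]; ring
  · rw [hj']
    simp only [map_add, map_smul, smul_eq_mul]
    rw [hμj]; ring
  · rw [hi']
    simp only [map_add, map_smul, LinearMap.add_apply, LinearMap.smul_apply, smul_eq_mul]
    rw [hbij, hbji]
    ring
  · rw [hj']
    simp only [map_add, map_smul, LinearMap.add_apply, LinearMap.smul_apply, smul_eq_mul]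
    rw [hbij, hbji]
    ring

lemma myScaleMove {B : LinearMap.BilinForm F V}
    {b : Module.Basis (Fin n) F V} (hb : IsOrthoBasis B b) (i₀ : Fin n) {a : F} (ha : a ≠ 0) :
    ∃ b' : Module.Basis (Fin n) F V, MyStep B b b' ∧ b' i₀ = a • b i₀ ∧
      ∀ x, x ≠ i₀ → b' x = b x := by
  classical
  set g : Fin n → Fˣ := fun x => if x = i₀ then Units.mk0 a ha else 1 with hg
  refine ⟨b.unitsSMul g, ⟨hb, ?_, ?_⟩, ?_, ?_⟩
  · intro x y hxy
    rw [Module.Basis.unitsSMul_apply, Module.Basis.unitsSMul_apply]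
    simp only [Units.smul_def, map_smul, LinearMap.smul_apply, smul_eq_mul]
    rw [hb x y hxy]
    ring
  · apply myStepCard i₀ i₀
    intro x hx _
    rw [Module.Basis.unitsSMul_apply]
    simp [hg, hx]
  · rw [Module.Basis.unitsSMul_apply]
    simp [hg, Units.smul_def]
  · intro x hx
    rw [Module.Basis.unitsSMul_apply]
    simp [hg, hx]

lemma myPermMove {B : LinearMap.BilinForm F V}
    {b : Module.Basis (Fin n) F V} (hb : IsOrthoBasis B b) (e : Equiv.Perm (Fin n)) :
    ∃ b' : Module.Basis (Fin n) F V, MyStep B b b' ∧ ∀ x, b' x = b (e x) := by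
  refine ⟨b.reindex e.symm, ⟨hb, ?_, ?_⟩, ?_⟩
  · intro x y hxy
    rw [Module.Basis.reindex_apply, Module.Basis.reindex_apply]
    exact hb _ _ (by simp [hxy])
  · rw [Module.Basis.range_reindex, Set.inter_self, myNcardRange]
    omega
  · intro x
    rw [Module.Basis.reindex_apply, Equiv.symm_symm]

lemma myFinish1 {B : LinearMap.BilinForm F V} (hsymm : ∀ x y, B x y = B y x)
    (hinj : Function.Injective ⇑B)
    {b : Module.Basis (Fin n) F V} (hb : IsOrthoBasis B b) {v : V} (hv : B v v ≠ 0)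
    {i₀ : Fin n} (hS : ∀ x, x ≠ i₀ → B v (b x) = 0) :
    ∃ b' : Module.Basis (Fin n) F V, MyStep B b b' ∧ b' i₀ = v ∧ ∀ x, x ≠ i₀ → b' x = b x := by
  have hd := myDiagNeZero hinj hb i₀
  set a := B v (b i₀) / B (b i₀) (b i₀) with ha
  have hveq : v = a • b i₀ := by
    rw [← sub_eq_zero]
    apply myPerp hinj (b := b)
    intro x
    simp only [map_sub, LinearMap.sub_apply, map_smul, LinearMap.smul_apply, smul_eq_mul]
    rcases eq_or_ne x i₀ with rfl | hx
    · rw [ha]; field_simp; ring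
    · rw [hS x hx, hb i₀ x (Ne.symm hx)]; ring
  have ha0 : a ≠ 0 := by
    intro h
    rw [hveq, h, zero_smul] at hv
    simp at hv
  obtain ⟨b', hstep, hb'i, hb'x⟩ := myScaleMove hb i₀ ha0
  exact ⟨b', hstep, by rw [hb'i, ← hveq], hb'x⟩

lemma myExistsNe (hcard3 : 3 ≤ Nat.card F) (a b : F) : ∃ y : F, y ≠ a ∧ y ≠ b := by
  by_contra hno
  push_neg at hno
  have huniv : (Set.univ : Set F) ⊆ {a, b} := by
    intro y _
    by_cases h : y = a
    · exact Or.inl h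
    · exact Or.inr (hno y h)
  have h1 : (Set.univ : Set F).ncard ≤ ({a, b} : Set F).ncard :=
    Set.ncard_le_ncard huniv (Set.toFinite _)
  rw [Set.ncard_univ] at h1
  have h2 : ({a, b} : Set F).ncard ≤ 2 := le_trans (Set.ncard_insert_le _ _) (by simp)
  omega

lemma mySqInj [CharP F 2] {x y : F} (h : x^2 = y^2) : x = y := by
  have h2 : (2 : F) = 0 := CharTwo.two_eq_zero
  have hxy : (x + y)^2 = 0 := by linear_combination h + (x*y + y^2) * h2
  have : x + y = 0 := by
    have := pow_eq_zero_iff (n := 2) (by norm_num) |>.mp hxy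
    exact this
  linear_combination this - y * h2

lemma myExistsY (hcard3 : 3 ≤ Nat.card F) [CharP F 2] (c1 : F) {c2 : F} (hc2 : c2 ≠ 0) :
    ∃ y : F, y ≠ 0 ∧ c1 + y^2 * c2 ≠ 0 := by
  by_contra hno
  push_neg at hno
  obtain ⟨y₁, hy₁0, hy₁⟩ := myExistsNe hcard3 0 0
  obtain ⟨y₂, hy₂0, hy₂1⟩ := myExistsNe hcard3 0 y₁
  have e1 := hno y₁ hy₁0
  have e2 := hno y₂ hy₂0
  have : y₂^2 = y₁^2 := by
    have hsq : y₂^2 * c2 = y₁^2 * c2 := by linear_combination e2 - e1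
    exact mul_right_cancel₀ hc2 hsq
  exact hy₂1 (mySqInj this)

lemma myReduce [CharP F 2] (hcard3 : 3 ≤ Nat.card F) {B : LinearMap.BilinForm F V}
    (hsymm : ∀ x y, B x y = B y x) (hinj : Function.Injective ⇑B) (k : ℕ) (v : V)
    (hv : B v v ≠ 0) :
    ∀ m : ℕ, ∀ b : Module.Basis (Fin n) F V, IsOrthoBasis B b →
      (∀ i : Fin n, (i : ℕ) < k → B v (b i) = 0) →
      {x : Fin n | B v (b x) ≠ 0}.ncard ≤ m →
      ({x : Fin n | B v (b x) ≠ 0}.ncard ≤ 2 ∨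
        (∃ i ∈ {x : Fin n | B v (b x) ≠ 0}, ∃ j ∈ {x : Fin n | B v (b x) ≠ 0},
          (B v (b i))^2 * B (b j) (b j) ≠ (B v (b j))^2 * B (b i) (b i)) ∨
        (∃ j : Fin n, k ≤ (j : ℕ) ∧ B v (b j) = 0)) →
      ∃ b' : Module.Basis (Fin n) F V, ∃ i₀ : Fin n, k ≤ (i₀ : ℕ) ∧
        Relation.ReflTransGen (MyStep B) b b' ∧ IsOrthoBasis B b' ∧ b' i₀ = v ∧
        ∀ i : Fin n, (i : ℕ) < k → b' i = b i := by
  have h2 : (2 : F) = 0 := CharTwo.two_eq_zero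
  have hempty : ∀ b : Module.Basis (Fin n) F V, {x : Fin n | B v (b x) ≠ 0} = ∅ → False := by
    intro b hS
    apply hv
    have hv0 : v = 0 := myPerp hinj (b := b) (fun i => by
      by_contra h
      exact absurd (Set.eq_empty_iff_forall_notMem.1 hS i) (by simp [h]))
    rw [hv0]; simp
  intro m
  induction m with
  | zero =>
    intro b hb hμ hm _
    exact absurd (Set.ncard_eq_zero (Set.toFinite _) |>.1 (Nat.le_zero.1 hm))
      (fun h => hempty b h)
  | succ m IH =>
    intro b hb hμ hm hgood
    set S := {x : Fin n | B v (b x) ≠ 0} with hSdef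
    have hfin : S.Finite := Set.toFinite _
    have hkS : ∀ x ∈ S, k ≤ (x : ℕ) := by
      intro x hx
      by_contra h
      exact hx (hμ x (by omega))
    by_cases h1 : S.ncard ≤ 1
    · -- |S| = 1 : finish by scaling
      have h0 : S.ncard ≠ 0 := by
        intro h
        exact hempty b (Set.ncard_eq_zero (Set.toFinite _) |>.1 h)
      have hS1 : S.ncard = 1 := by omega
      obtain ⟨i₀, hSi⟩ := Set.ncard_eq_one.1 hS1
      have hi₀S : i₀ ∈ S := by rw [hSi]; exact rfl
      obtain ⟨b', hstep, hb'i, hb'x⟩ := myFinish1 hsymm hinj hb hv (i₀ := i₀) (by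
        intro x hx
        by_contra h
        have hxS : x ∈ S := h
        rw [hSi] at hxS
        exact hx hxS)
      refine ⟨b', i₀, hkS i₀ hi₀S, Relation.ReflTransGen.single hstep, hstep.2.1, hb'i, ?_⟩
      intro x hxk
      have hik := hkS i₀ hi₀S
      exact hb'x x (by intro h; rw [h] at hxk; omega)
    push_neg at h1
    by_cases hpair : ∃ i ∈ S, ∃ j ∈ S,
        (B v (b i))^2 * B (b j) (b j) ≠ (B v (b j))^2 * B (b i) (b i)
    · -- a merge is possible
      obtain ⟨i, hiS, j, hjS, hcross⟩ := hpair
      have hij : i ≠ j := by rintro rfl; exact hcross rfl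
      obtain ⟨b₁, hstep, hμ1i, hμ1j, hx1⟩ := myMergeMove hsymm hb v hij hcross
      have hb₁ : IsOrthoBasis B b₁ := hstep.2.1
      have hS₁ : {x : Fin n | B v (b₁ x) ≠ 0} = S \ {j} := by
        ext x
        simp only [Set.mem_setOf_eq, Set.mem_diff, Set.mem_singleton_iff]
        rcases eq_or_ne x i with rfl | hxi
        · exact iff_of_true hμ1i ⟨hiS, hij⟩
        rcases eq_or_ne x j with rfl | hxj
        · exact iff_of_false (by simp [hμ1j]) (fun h => h.2 rfl)
        · rw [hx1 x hxi hxj]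
          exact ⟨fun h => ⟨h, hxj⟩, fun h => h.1⟩
      have hμ₁ : ∀ x : Fin n, (x : ℕ) < k → B v (b₁ x) = 0 := by
        intro x hxk
        have hxi : x ≠ i := by intro h; have := hkS i hiS; rw [h] at hxk; omega
        have hxj : x ≠ j := by intro h; have := hkS j hjS; rw [h] at hxk; omega
        rw [hx1 x hxi hxj]; exact hμ x hxk
      have hcard₁ : {x : Fin n | B v (b₁ x) ≠ 0}.ncard ≤ m := by
        rw [hS₁]
        have := Set.ncard_diff_singleton_lt_of_mem hjS hfin
        omega
      obtain ⟨b', i₀, hki₀, hrtg, hb', hb'i, hb'pre⟩ :=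
        IH b₁ hb₁ hμ₁ hcard₁ (Or.inr (Or.inr ⟨j, hkS j hjS, hμ1j⟩))
      refine ⟨b', i₀, hki₀, Relation.ReflTransGen.head hstep hrtg, hb', hb'i, ?_⟩
      intro x hxk
      have hxi : x ≠ i := by intro h; have := hkS i hiS; rw [h] at hxk; omega
      have hxj : x ≠ j := by intro h; have := hkS j hjS; rw [h] at hxk; omega
      rw [hb'pre x hxk, hx1 x hxi hxj]
    push_neg at hpair
    by_cases hle2 : S.ncard ≤ 2
    · -- |S| = 2 : v lives in the plane, one merge then scale
      have hS2 : S.ncard = 2 := by omega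
      obtain ⟨i, j, hij, hSij⟩ := Set.ncard_eq_two.1 hS2
      have hiS : i ∈ S := by rw [hSij]; exact Or.inl rfl
      have hjS : j ∈ S := by rw [hSij]; exact Or.inr rfl
      have hdi := myDiagNeZero hinj hb i
      have hdj := myDiagNeZero hinj hb j
      have hveq : v = (B v (b i) / B (b i) (b i)) • b i
          + (B v (b j) / B (b j) (b j)) • b j := by
        rw [← sub_eq_zero]
        apply myPerp hinj (b := b)
        intro x
        simp only [map_sub, map_add, LinearMap.sub_apply, LinearMap.add_apply, map_smul,
          LinearMap.smul_apply, smul_eq_mul]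
        rcases eq_or_ne x i with heq | hxi
        · rw [heq, hb j i hij.symm]; field_simp; ring
        rcases eq_or_ne x j with heq | hxj
        · rw [heq, hb i j hij]; field_simp; ring
        · have hxS : B v (b x) = 0 := by
            by_contra h
            have hxS : x ∈ S := h
            rw [hSij] at hxS
            rcases hxS with h' | h' <;> [exact hxi h'; exact hxj h']
          rw [hxS, hb i x (Ne.symm hxi), hb j x (Ne.symm hxj)]; ring
      have hQ : B v v * (B (b i) (b i) * B (b j) (b j))
          = (B v (b i))^2 * B (b j) (b j) + (B v (b j))^2 * B (b i) (b i) := by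
        nth_rewrite 2 [hveq]
        simp only [map_add, map_smul, smul_eq_mul]
        field_simp
      have hcross : (B v (b i))^2 * B (b j) (b j) ≠ (B v (b j))^2 * B (b i) (b i) := by
        intro heq
        apply hv
        have hsum : (B v (b i))^2 * B (b j) (b j) + (B v (b j))^2 * B (b i) (b i) = 0 := by
          linear_combination heq + ((B v (b j))^2 * B (b i) (b i)) * h2
        have := hQ.trans hsum
        rcases mul_eq_zero.1 this with h | h
        · exact h
        · exact absurd h (by simp [hdi, hdj])
      obtain ⟨b₁, hstep, hμ1i, hμ1j, hx1⟩ := myMergeMove hsymm hb v hij hcross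
      have hb₁ : IsOrthoBasis B b₁ := hstep.2.1
      obtain ⟨b₂, hstep2, hb2i, hb2x⟩ := myFinish1 hsymm hinj hb₁ hv (i₀ := i) (by
        intro x hxi
        rcases eq_or_ne x j with rfl | hxj
        · exact hμ1j
        · rw [hx1 x hxi hxj]
          by_contra h
          have hxS : x ∈ S := h
          rw [hSij] at hxS
          rcases hxS with h' | h' <;> [exact hxi h'; exact hxj h'])
      refine ⟨b₂, i, hkS i hiS,
        Relation.ReflTransGen.head hstep (Relation.ReflTransGen.single hstep2),
        hstep2.2.1, hb2i, ?_⟩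
      intro x hxk
      have hxi : x ≠ i := by intro h; have := hkS i hiS; rw [h] at hxk; omega
      have hxj : x ≠ j := by intro h; have := hkS j hjS; rw [h] at hxk; omega
      rw [hb2x x hxi, hx1 x hxi hxj]
    · -- |S| ≥ 3 and all invariants equal: grow then two merges
      push_neg at hle2
      obtain ⟨j₀, hkj₀, hμj₀⟩ : ∃ j : Fin n, k ≤ (j : ℕ) ∧ B v (b j) = 0 := by
        rcases hgood with h | h | h
        · omega
        · exact absurd h (by push_neg; exact hpair)
        · exact h
      -- three distinct elements of S
      obtain ⟨i, hiS⟩ : S.Nonempty := Set.nonempty_of_ncard_ne_zero (by omega)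
      obtain ⟨l, hlS'⟩ : (S \ {i}).Nonempty := by
        apply Set.nonempty_of_ncard_ne_zero
        rw [Set.ncard_diff_singleton_of_mem hiS]
        omega
      obtain ⟨l', hl'S'⟩ : ((S \ {i}) \ {l}).Nonempty := by
        apply Set.nonempty_of_ncard_ne_zero
        rw [Set.ncard_diff_singleton_of_mem hlS',
          Set.ncard_diff_singleton_of_mem hiS]
        omega
      have hlS : l ∈ S := hlS'.1
      have hli : l ≠ i := hlS'.2
      have hl'S : l' ∈ S := hl'S'.1.1
      have hl'i : l' ≠ i := hl'S'.1.2
      have hl'l : l' ≠ l := hl'S'.2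
      have hij₀ : i ≠ j₀ := by intro h; rw [h] at hiS; exact hiS hμj₀
      have hlj₀ : l ≠ j₀ := by intro h; rw [h] at hlS; exact hlS hμj₀
      have hl'j₀ : l' ≠ j₀ := by intro h; rw [h] at hl'S; exact hl'S hμj₀
      have hdi := myDiagNeZero hinj hb i
      have hdj₀ := myDiagNeZero hinj hb j₀
      have hdl := myDiagNeZero hinj hb l
      have hdl' := myDiagNeZero hinj hb l'
      obtain ⟨y, hy0, hD⟩ := myExistsY hcard3 (B (b i) (b i)) hdj₀
      -- move 1 : grow at (i, j₀)
      obtain ⟨b₁, hstep1, hg1, hg2, hg3, hg4, hx1⟩ := myGrowMove hsymm hb v hij₀ hD hμj₀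
      have hb₁ : IsOrthoBasis B b₁ := hstep1.2.1
      have hb₁l : b₁ l = b l := hx1 l hli hlj₀
      have hb₁l' : b₁ l' = b l' := hx1 l' hl'i hl'j₀
      -- move 2 : merge (i, l) in b₁
      have hcross1 : (B v (b₁ i))^2 * B (b₁ l) (b₁ l)
          ≠ (B v (b₁ l))^2 * B (b₁ i) (b₁ i) := by
        rw [hg1, hg3, hb₁l]
        intro heq
        have hall := hpair i hiS l hlS
        have : (B v (b l))^2 * (y^2 * B (b j₀) (b j₀)) = 0 := by
          linear_combination heq - hall + ((B v (b l))^2 * y^2 * (B (b j₀)) (b j₀)) * h2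
        rcases mul_eq_zero.1 this with h | h
        · exact hlS (pow_eq_zero_iff (two_ne_zero) |>.1 h)
        · rcases mul_eq_zero.1 h with h' | h'
          · exact hy0 (pow_eq_zero_iff (two_ne_zero) |>.1 h')
          · exact hdj₀ h'
      have hil : i ≠ l := Ne.symm hli
      obtain ⟨b₂, hstep2, hμ2i, hμ2l, hx2⟩ := myMergeMove hsymm hb₁ v hil hcross1
      have hb₂ : IsOrthoBasis B b₂ := hstep2.2.1
      have hb₂j₀ : b₂ j₀ = b₁ j₀ := hx2 j₀ (Ne.symm hij₀) (Ne.symm hlj₀)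
      have hb₂l' : b₂ l' = b l' := by rw [hx2 l' hl'i hl'l, hb₁l']
      -- move 3 : merge (j₀, l') in b₂
      have hcross2 : (B v (b₂ j₀))^2 * B (b₂ l') (b₂ l')
          ≠ (B v (b₂ l'))^2 * B (b₂ j₀) (b₂ j₀) := by
        rw [hb₂j₀, hb₂l', hg2, hg4]
        intro heq
        have hall := hpair i hiS l' hl'S
        have : (B v (b l'))^2 * (B (b i) (b i))^2 * B (b j₀) (b j₀) = 0 := by
          linear_combination - heq + (y^2 * (B (b j₀) (b j₀))^2) * hall
        rcases mul_eq_zero.1 this with h | h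
        · rcases mul_eq_zero.1 h with h' | h'
          · exact hl'S (pow_eq_zero_iff (two_ne_zero) |>.1 h')
          · exact hdi (pow_eq_zero_iff (two_ne_zero) |>.1 h')
        · exact hdj₀ h
      have hj₀l' : j₀ ≠ l' := Ne.symm hl'j₀
      obtain ⟨b₃, hstep3, hμ3j₀, hμ3l', hx3⟩ := myMergeMove hsymm hb₂ v hj₀l' hcross2
      have hb₃ : IsOrthoBasis B b₃ := hstep3.2.1
      -- bookkeeping
      have hout : ∀ x : Fin n, x ≠ i → x ≠ j₀ → x ≠ l → x ≠ l' → b₃ x = b x := by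
        intro x hxi hxj₀ hxl hxl'
        rw [hx3 x hxj₀ hxl', hx2 x hxi hxl, hx1 x hxi hxj₀]
      have hμ3l : B v (b₃ l) = 0 := by
        rw [hx3 l hlj₀ (Ne.symm hl'l)]
        exact hμ2l
      have hsub : {x : Fin n | B v (b₃ x) ≠ 0} ⊆ insert j₀ S \ ({l, l'} : Set (Fin n)) := by
        intro x hx
        simp only [Set.mem_setOf_eq] at hx
        have hxl : x ≠ l := by rintro rfl; exact hx hμ3l
        have hxl' : x ≠ l' := by rintro rfl; exact hx hμ3l'
        refine ⟨?_, by simp [hxl, hxl']⟩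
        rcases eq_or_ne x j₀ with rfl | hxj₀
        · exact Set.mem_insert _ _
        rcases eq_or_ne x i with rfl | hxi
        · exact Set.mem_insert_of_mem _ hiS
        · rw [hout x hxi hxj₀ hxl hxl'] at hx
          exact Set.mem_insert_of_mem _ hx
      have hcard₃ : {x : Fin n | B v (b₃ x) ≠ 0}.ncard ≤ m := by
        have hb1 : ({l, l'} : Set (Fin n)) ⊆ insert j₀ S := by
          rintro x (rfl | rfl)
          · exact Set.mem_insert_of_mem _ hlS
          · exact Set.mem_insert_of_mem _ hl'S
        have hd : (insert j₀ S \ ({l, l'} : Set (Fin n))).ncard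
            = (insert j₀ S).ncard - 2 := by
          rw [Set.ncard_diff hb1 (Set.toFinite _), Set.ncard_pair (Ne.symm hl'l)]
        have hins : (insert j₀ S).ncard = S.ncard + 1 := by
          have hj₀S : j₀ ∉ S := fun h => h hμj₀
          rw [Set.ncard_insert_of_notMem hj₀S hfin]
        have := Set.ncard_le_ncard hsub (Set.toFinite _)
        omega
      have hμ₃ : ∀ x : Fin n, (x : ℕ) < k → B v (b₃ x) = 0 := by
        intro x hxk
        have hne : ∀ z : Fin n, z ∈ S ∨ k ≤ (z:ℕ) → x ≠ z := by
          intro z hz heq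
          rcases hz with hz | hz
          · have := hkS z hz; rw [heq] at hxk; omega
          · rw [heq] at hxk; omega
        rw [hout x (hne i (Or.inl hiS)) (hne j₀ (Or.inr hkj₀)) (hne l (Or.inl hlS))
          (hne l' (Or.inl hl'S))]
        exact hμ x hxk
      obtain ⟨b', i₀, hki₀, hrtg, hb', hb'i, hb'pre⟩ :=
        IH b₃ hb₃ hμ₃ hcard₃ (Or.inr (Or.inr ⟨l, hkS l hlS, hμ3l⟩))
      refine ⟨b', i₀, hki₀,
        Relation.ReflTransGen.head hstep1
          (Relation.ReflTransGen.head hstep2 (Relation.ReflTransGen.head hstep3 hrtg)),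
        hb', hb'i, ?_⟩
      intro x hxk
      have hne : ∀ z : Fin n, z ∈ S ∨ k ≤ (z:ℕ) → x ≠ z := by
        intro z hz heq
        rcases hz with hz | hz
        · have := hkS z hz; rw [heq] at hxk; omega
        · rw [heq] at hxk; omega
      rw [hb'pre x hxk, hout x (hne i (Or.inl hiS)) (hne j₀ (Or.inr hkj₀))
        (hne l (Or.inl hlS)) (hne l' (Or.inl hl'S))]

lemma myChainRefl {B : LinearMap.BilinForm F V} {b : Module.Basis (Fin n) F V}
    (hb : IsOrthoBasis B b) : ChainEquiv B b b :=
  ⟨0, fun _ => b, fun _ => hb, rfl, rfl, fun i => i.elim0⟩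

lemma myChainSnoc {B : LinearMap.BilinForm F V} {b c c' : Module.Basis (Fin n) F V}
    (h : ChainEquiv B b c) (hstep : MyStep B c c') : ChainEquiv B b c' := by
  obtain ⟨r, s, hortho, h0, hlast, hsteps⟩ := h
  refine ⟨r + 1, Fin.snoc s c', ?_, ?_, ?_, ?_⟩
  · intro i
    refine Fin.lastCases ?_ ?_ i
    · rw [Fin.snoc_last]; exact hstep.2.1
    · intro i0; rw [Fin.snoc_castSucc]; exact hortho i0
  · have : (0 : Fin (r + 2)) = Fin.castSucc 0 := rfl
    rw [this, Fin.snoc_castSucc]; exact h0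
  · rw [Fin.snoc_last]
  · intro i
    refine Fin.lastCases ?_ ?_ i
    · rw [Fin.succ_last, Fin.snoc_last, Fin.snoc_castSucc, hlast]
      exact hstep.2.2
    · intro i0
      rw [Fin.succ_castSucc, Fin.snoc_castSucc, Fin.snoc_castSucc]
      exact hsteps i0

lemma myRTGChain {B : LinearMap.BilinForm F V} {b c : Module.Basis (Fin n) F V}
    (hb : IsOrthoBasis B b) (h : Relation.ReflTransGen (MyStep B) b c) :
    ChainEquiv B b c := by
  induction h with
  | refl => exact myChainRefl hb
  | tail _ hstep ih => exact myChainSnoc ih hstep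

lemma myKey [CharP F 2] (hcard3 : 3 ≤ Nat.card F) {B : LinearMap.BilinForm F V}
    (hsymm : ∀ x y, B x y = B y x) (hinj : Function.Injective ⇑B) :
    ∀ m : ℕ, ∀ b c : Module.Basis (Fin n) F V, IsOrthoBasis B b → IsOrthoBasis B c →
      (∀ i : Fin n, (i : ℕ) < n - m → b i = c i) →
      Relation.ReflTransGen (MyStep B) b c := by
  intro m
  induction m with
  | zero =>
    intro b c hb hc hpre
    have hbc : ⇑b = ⇑c := funext fun i => hpre i (by omega)
    exact Relation.ReflTransGen.single
      ⟨hb, hc, by rw [hbc, Set.inter_self, myNcardRange]; omega⟩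
  | succ m IH =>
    intro b c hb hc hpre
    have h2F : (2 : F) = 0 := CharTwo.two_eq_zero
    by_cases hmn : n ≤ m
    · exact IH b c hb hc (fun i hi => absurd hi (by omega))
    push_neg at hmn
    set k := n - (m + 1) with hk
    have hkn : k < n := by omega
    have hk1 : k + 1 = n - m := by omega
    set κ : Fin n := ⟨k, hkn⟩ with hκ
    have hprefix : ∀ l : Fin n, k ≤ (l : ℕ) →
        ∀ i : Fin n, (i : ℕ) < k → B (c l) (b i) = 0 := by
      intro l hl i hi
      rw [hpre i (by omega)]
      exact hc l i (by intro h; rw [h] at hl; omega)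
    have hSsub : ∀ l : Fin n, k ≤ (l : ℕ) →
        {x : Fin n | B (c l) (b x) ≠ 0}.ncard ≤ n - k := by
      intro l hl
      have hmap : ∀ x ∈ {x : Fin n | B (c l) (b x) ≠ 0},
          (⟨min ((x : ℕ) - k) (n - k - 1), by omega⟩ : Fin (n - k)) ∈ Set.univ := by
        intro x _; trivial
      have hinj' : Set.InjOn
          (fun x : Fin n => (⟨min ((x : ℕ) - k) (n - k - 1), by omega⟩ : Fin (n - k)))
          {x : Fin n | B (c l) (b x) ≠ 0} := by
        intro x hx y hy hxy
        have hkx : k ≤ (x : ℕ) := by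
          by_contra h; exact hx (hprefix l hl x (by omega))
        have hky : k ≤ (y : ℕ) := by
          by_contra h; exact hy (hprefix l hl y (by omega))
        have h1 : min ((x:ℕ) - k) (n - k - 1) = (x:ℕ) - k := by
          have := x.isLt; omega
        have h2 : min ((y:ℕ) - k) (n - k - 1) = (y:ℕ) - k := by
          have := y.isLt; omega
        have := congrArg Fin.val hxy
        simp only [h1, h2] at this
        exact Fin.ext (by omega)
      have := Set.ncard_le_ncard_of_injOn _ hmap hinj' (Set.toFinite _)
      rwa [Set.ncard_univ, Nat.card_eq_fintype_card, Fintype.card_fin] at this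
    -- choose a good l
    have hgoodl : ∃ l : Fin n, k ≤ (l : ℕ) ∧
        ({x : Fin n | B (c l) (b x) ≠ 0}.ncard ≤ 2 ∨
         (∃ i ∈ {x : Fin n | B (c l) (b x) ≠ 0}, ∃ j ∈ {x : Fin n | B (c l) (b x) ≠ 0},
           (B (c l) (b i))^2 * B (b j) (b j) ≠ (B (c l) (b j))^2 * B (b i) (b i)) ∨
         (∃ j : Fin n, k ≤ (j : ℕ) ∧ B (c l) (b j) = 0)) := by
      by_cases hA : n - k ≤ 2
      · exact ⟨κ, le_refl _, Or.inl (le_trans (hSsub κ (le_refl _)) hA)⟩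
      · -- at most one bad candidate
        set lam2 : Fin n := ⟨k + 1, by omega⟩ with hlam2
        by_contra hno
        push_neg at hno
        obtain ⟨hn1, hp1, hs1⟩ := hno κ (le_refl _)
        obtain ⟨hn2, hp2, hs2⟩ := hno lam2 (by simp [hlam2])
        -- both are "bad": full support ≥ k and all invariants equal
        have hd : ∀ x : Fin n, B (b x) (b x) ≠ 0 := myDiagNeZero hinj hb
        have hμ1 : ∀ j : Fin n, k ≤ (j : ℕ) → B (c κ) (b j) ≠ 0 := hs1
        have hμ2 : ∀ j : Fin n, k ≤ (j : ℕ) → B (c lam2) (b j) ≠ 0 := hs2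
        set ρ := B (c κ) (b κ) / B (c lam2) (b κ) with hρ
        have hμ2κ : B (c lam2) (b κ) ≠ 0 := hμ2 κ (le_refl _)
        have hall : ∀ x : Fin n, B (c κ) (b x) = ρ * B (c lam2) (b x) := by
          intro x
          by_cases hxk : k ≤ (x : ℕ)
          · have hμ1x := hμ1 x hxk
            have hμ2x := hμ2 x hxk
            have e1 := hp1 x hμ1x κ (hμ1 κ (le_refl _))
            have e2 := hp2 κ hμ2κ x hμ2x
            have hsq : (B (c κ) (b x) * B (c lam2) (b κ))^2
                = (B (c κ) (b κ) * B (c lam2) (b x))^2 := by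
              have hc1 : ((B (c κ) (b x) * B (c lam2) (b κ))^2
                  - (B (c κ) (b κ) * B (c lam2) (b x))^2) * B (b κ) (b κ) = 0 := by
                linear_combination (B (c lam2) (b κ))^2 * e1 - (B (c κ) (b κ))^2 * e2
                  + ((B (c lam2)) (b κ) ^ 2 * (B (c κ)) (b κ) ^ 2 * (B (b x)) (b x)
                    - (B (c κ)) (b κ) ^ 2 * (B (c lam2)) (b x) ^ 2 * (B (b κ)) (b κ)) * h2F
              rcases mul_eq_zero.1 hc1 with h | h
              · exact sub_eq_zero.1 h
              · exact absurd h (hd κ)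
            have := mySqInj hsq
            rw [hρ]
            field_simp
            linear_combination this
          · rw [hprefix κ (le_refl _) x (by omega), hprefix lam2 (by simp [hlam2]) x (by omega)]
            ring
        have hceq : c κ = ρ • c lam2 := by
          rw [← sub_eq_zero]
          apply myPerp hinj (b := b)
          intro x
          simp only [map_sub, LinearMap.sub_apply, map_smul, LinearMap.smul_apply, smul_eq_mul]
          rw [hall x]; ring
        have hklam : κ ≠ lam2 := by
          intro h
          have := congrArg Fin.val h
          simp [hκ, hlam2] at this
        have := congrArg (fun w => c.repr w κ) hceq
        simp only [Module.Basis.repr_self, map_smul, Finsupp.smul_apply, smul_eq_mul] at this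
        rw [Finsupp.single_eq_same, Finsupp.single_eq_of_ne hklam] at this
        simp at this
    obtain ⟨l, hkl, hgood⟩ := hgoodl
    have hvQ : B (c l) (c l) ≠ 0 := myDiagNeZero hinj hc l
    obtain ⟨b₁, i₀, hki₀, hrtg1, hb₁, hb₁i₀, hb₁pre⟩ :=
      myReduce hcard3 hsymm hinj k (c l) hvQ n b hb (hprefix l hkl)
        (by
          have := Set.ncard_le_ncard (Set.subset_univ {x : Fin n | B (c l) (b x) ≠ 0})
            (Set.toFinite _)
          rwa [Set.ncard_univ, Nat.card_eq_fintype_card, Fintype.card_fin] at this)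
        hgood
    obtain ⟨b₂, hstep2, hb₂x⟩ := myPermMove hb₁ (Equiv.swap κ i₀)
    have hb₂ : IsOrthoBasis B b₂ := hstep2.2.1
    obtain ⟨c₂, hstepc, hc₂x⟩ := myPermMove hc (Equiv.swap κ l)
    have hc₂ : IsOrthoBasis B c₂ := hstepc.2.1
    have hb₂κ : b₂ κ = c l := by
      rw [hb₂x κ, Equiv.swap_apply_left, hb₁i₀]
    have hc₂κ : c₂ κ = c l := by
      rw [hc₂x κ, Equiv.swap_apply_left]
    have hrtg3 : Relation.ReflTransGen (MyStep B) b₂ c₂ := by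
      apply IH b₂ c₂ hb₂ hc₂
      intro i hi
      rcases Nat.lt_or_ge (i : ℕ) k with hik | hik
      · have hiκ : i ≠ κ := by intro h; rw [h] at hik; simp [hκ] at hik
        have hii₀ : i ≠ i₀ := by intro h; rw [h] at hik; omega
        have hil : i ≠ l := by intro h; rw [h] at hik; omega
        rw [hb₂x i, Equiv.swap_apply_of_ne_of_ne hiκ hii₀, hb₁pre i hik,
          hc₂x i, Equiv.swap_apply_of_ne_of_ne hiκ hil]
        exact hpre i (by omega)
      · have hiκ : i = κ := by
          apply Fin.ext
          simp only [hκ]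
          omega
        rw [hiκ, hb₂κ, hc₂κ]
    have hstepc' : MyStep B c₂ c := ⟨hstepc.2.1, hstepc.1, by
      rw [Set.inter_comm]; exact hstepc.2.2⟩
    exact ((hrtg1.tail hstep2).trans hrtg3).tail hstepc'

end ChainProof


/-- Let `F ≠ 𝔽₂` be a finite field of characteristic `2` and `(V, B)` an inner product
space over `F`.  Then any two orthogonal bases of `V` are chain equivalent over `F`. -/
theorem chainLemma_finite_char_two_field {F : Type*} [Field F] [Finite F] [CharP F 2]
    (hF : Nat.card F ≠ 2)
    {V : Type*} [AddCommGroup V] [Module F V] (B : LinearMap.BilinForm F V)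
    (hB : IsInnerProductSpace F V B)
    {n : ℕ} (b c : Module.Basis (Fin n) F V) (hb : IsOrthoBasis B b) (hc : IsOrthoBasis B c) :
    ChainEquiv B b c := by
  have hsymm := hB.symm
  have hinj : Function.Injective ⇑B := hB.nondegenerate.injective
  have hcard3 : 3 ≤ Nat.card F := by
    have h1 : 1 < Nat.card F := Finite.one_lt_card_iff_nontrivial.mpr inferInstance
    omega
  exact myRTGChain hb (myKey hcard3 hsymm hinj n b c hb hc (fun i hi => absurd hi (by omega)))
end

section
/- Let V = F₂⁴ be equipped with the standard dot product β(x,y) = Σ xᵢyᵢ (the form ⟨1,1,1,1⟩ over F₂). Then the standard basis e = (e₁,e₂,e₃,e₄) and the tuple ê = (ê₁,ê₂,ê₃,ê₄), where êᵢ = e₁+e₂+e₃+e₄ − eᵢ, are both orthogonal bases of V, and e and ê are NOT chain equivalent; in fact e is chain equivalent only to itself (up to the set of basis vectors). Hence the Chain Lemma fails over F₂. -/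
open Function TensorProduct

/-- The standard dot product bilinear form on `Fin n → F`. -/
def dotForm (F : Type*) [CommRing F] (n : ℕ) : LinearMap.BilinForm F (Fin n → F) :=
  LinearMap.mk₂ F (fun x y => ∑ i, x i * y i)
    (fun x x' y => by simp [add_mul, Finset.sum_add_distrib])
    (fun a x y => by simp [Finset.mul_sum, mul_assoc])
    (fun x y y' => by simp [mul_add, Finset.sum_add_distrib])
    (fun a x y => by simp [Finset.mul_sum, mul_left_comm])

namespace CF2

/-- The standard basis vectors of `𝔽₂⁴`. -/
def evec (i : Fin 4) : Fin 4 → ZMod 2 := fun j => if j = i then 1 else 0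

/-- The vectors `êᵢ = ∑_{j ≠ i} eⱼ`. -/
def hatv (i : Fin 4) : Fin 4 → ZMod 2 := fun j => if j = i then 0 else 1

lemma dotForm_apply (x y : Fin 4 → ZMod 2) :
    dotForm (ZMod 2) 4 x y = ∑ i, x i * y i := rfl

lemma basisFun_eq : ⇑(Pi.basisFun (ZMod 2) (Fin 4)) = evec := by
  funext i j; simp [Pi.basisFun_apply, Pi.single_apply, evec]

lemma diag_one (b : Module.Basis (Fin 4) (ZMod 2) (Fin 4 → ZMod 2))
    (hb : IsOrthoBasis (dotForm (ZMod 2) 4) b) (i : Fin 4) :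
    dotForm (ZMod 2) 4 (b i) (b i) = 1 := by
  by_contra h
  have h0 : dotForm (ZMod 2) 4 (b i) (b i) = 0 := by
    have : ∀ x : ZMod 2, x ≠ 1 → x = 0 := by decide
    exact this _ h
  have hz : (dotForm (ZMod 2) 4) (b i) = 0 := by
    apply b.ext
    intro j
    by_cases hj : i = j
    · subst hj; simpa using h0
    · simpa using hb i j hj
  have hbz : b i = 0 := by
    funext k
    have := congrArg (fun f => f (evec k)) (congrArg DFunLike.coe hz)
    simpa [dotForm_apply, evec, mul_ite, Finset.sum_ite_eq'] using this
  exact b.ne_zero i hbz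

lemma odd_class : ∀ v : Fin 4 → ZMod 2, (∑ i, v i * v i = (1:ZMod 2)) →
    (∃ k, v = evec k) ∨ (∃ k, v = hatv k) := by decide

lemma range_eq {f g : Fin 4 → (Fin 4 → ZMod 2)} (hf : Function.Injective f)
    (hg : Function.Injective g) (h : ∀ i, ∃ k, f i = g k) :
    Set.range f = Set.range g := by
  choose t ht using h
  have htinj : Function.Injective t := fun a b hab => hf (by rw [ht a, ht b, hab])
  have hts : Function.Surjective t := Finite.injective_iff_surjective.mp htinj
  ext v
  constructor
  · rintro ⟨i, rfl⟩; exact ⟨t i, (ht i).symm⟩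
  · rintro ⟨k, rfl⟩; obtain ⟨i, rfl⟩ := hts k; exact ⟨i, ht i⟩

lemma evec_inj : Function.Injective evec := by decide
lemma hatv_inj : Function.Injective hatv := by decide
lemma evec_ne_hatv : ∀ k l : Fin 4, evec k ≠ hatv l := by decide
lemma orth_he : ∀ k l : Fin 4, (∑ m, hatv k m * evec l m = 0) → k = l := by decide
lemma orth_eh : ∀ k l : Fin 4, (∑ m, evec k m * hatv l m = 0) → k = l := by decide
lemma third : ∀ i j : Fin 4, i ≠ j → ∃ m : Fin 4, m ≠ i ∧ m ≠ j := by decide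

/-- Any orthogonal basis of `(𝔽₂⁴, dot)` consists, as a set, either of the standard
basis vectors or of the vectors `êᵢ`. -/
lemma ortho_range (b : Module.Basis (Fin 4) (ZMod 2) (Fin 4 → ZMod 2))
    (hb : IsOrthoBasis (dotForm (ZMod 2) 4) b) :
    Set.range ⇑b = Set.range evec ∨ Set.range ⇑b = Set.range hatv := by
  have hmem : ∀ i, (∃ k, b i = evec k) ∨ (∃ k, b i = hatv k) := by
    intro i
    apply odd_class
    have := diag_one b hb i
    rwa [dotForm_apply] at this
  by_cases h1 : ∀ i, ∃ k, b i = evec k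
  · exact Or.inl (range_eq b.injective evec_inj h1)
  · by_cases h2 : ∀ i, ∃ k, b i = hatv k
    · exact Or.inr (range_eq b.injective hatv_inj h2)
    · exfalso
      push_neg at h1 h2
      obtain ⟨i, hi⟩ := h1
      obtain ⟨j, hj⟩ := h2
      obtain ⟨k, hk⟩ := (hmem i).resolve_left (not_exists.mpr hi)
      obtain ⟨l, hl⟩ := (hmem j).resolve_right (not_exists.mpr hj)
      have hij : i ≠ j := by
        intro h
        subst h
        exact evec_ne_hatv l k (hl.symm.trans hk)
      have hkl : k = l := by
        apply orth_he k l
        have := hb i j hij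
        rwa [hk, hl, dotForm_apply] at this
      obtain ⟨m, hmi, hmj⟩ := third i j hij
      rcases hmem m with ⟨p, hp⟩ | ⟨p, hp⟩
      · have hpk : p = k := by
          apply orth_eh p k
          have := hb m i hmi
          rwa [hp, hk, dotForm_apply] at this
        have : b m = b j := by rw [hp, hpk, hkl, ← hl]
        exact hmj (b.injective this)
      · have hpl : p = l := by
          apply orth_he p l
          have := hb m j hmj
          rwa [hp, hl, dotForm_apply] at this
        have : b m = b i := by rw [hp, hpl, ← hkl, ← hk]
        exact hmi (b.injective this)

lemma disj : Set.range evec ∩ Set.range hatv = ∅ := by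
  ext v
  simp only [Set.mem_inter_iff, Set.mem_range, Set.mem_empty_iff_false, iff_false, not_and]
  rintro ⟨i, rfl⟩ ⟨j, hj⟩
  exact evec_ne_hatv i j hj.symm

/-- Any basis chain-equivalent to the standard basis has the same underlying set. -/
lemma chain_range (c : Module.Basis (Fin 4) (ZMod 2) (Fin 4 → ZMod 2))
    (h : ChainEquiv (dotForm (ZMod 2) 4) (Pi.basisFun (ZMod 2) (Fin 4)) c) :
    Set.range ⇑c = Set.range evec := by
  obtain ⟨r, s, hs, h0, hlast, hstep⟩ := h
  have key : ∀ i : Fin (r + 1), Set.range ⇑(s i) = Set.range evec := by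
    intro i
    induction i using Fin.induction with
    | zero => rw [h0, basisFun_eq]
    | succ i ih =>
      rcases ortho_range (s i.succ) (hs _) with h | h
      · exact h
      · exfalso
        have h2 := hstep i
        rw [ih, h, disj, Set.ncard_empty] at h2
        omega
  rw [← hlast]
  exact key _

lemma hatv_li : LinearIndependent (ZMod 2) hatv :=
  Fintype.linearIndependent_iff.mpr (by decide)

lemma ortho_evec : ∀ i j : Fin 4, i ≠ j → ∑ k, evec i k * evec j k = 0 := by decide
lemma ortho_hatv : ∀ i j : Fin 4, i ≠ j → ∑ k, hatv i k * hatv j k = 0 := by decide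
lemma hatv_ne_evec' : ∀ i : Fin 4, evec i ≠ hatv 0 := by decide

end CF2

open CF2 in
/-- Failure of the Chain Lemma over `𝔽₂`. -/
theorem chainLemma_fails_over_F2 :
    IsOrthoBasis (dotForm (ZMod 2) 4) (Pi.basisFun (ZMod 2) (Fin 4)) ∧
    (∃ hatb : Module.Basis (Fin 4) (ZMod 2) (Fin 4 → ZMod 2),
      (∀ i j : Fin 4, hatb i j = if j = i then 0 else 1) ∧
      IsOrthoBasis (dotForm (ZMod 2) 4) hatb ∧
      ¬ ChainEquiv (dotForm (ZMod 2) 4) (Pi.basisFun (ZMod 2) (Fin 4)) hatb) ∧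
    (∀ c : Module.Basis (Fin 4) (ZMod 2) (Fin 4 → ZMod 2),
      ChainEquiv (dotForm (ZMod 2) 4) (Pi.basisFun (ZMod 2) (Fin 4)) c →
      Set.range c = Set.range (Pi.basisFun (ZMod 2) (Fin 4))) := by
  refine ⟨?_, ?_, ?_⟩
  · intro i j hij
    rw [basisFun_eq, dotForm_apply]
    exact ortho_evec i j hij
  · refine ⟨basisOfLinearIndependentOfCardEqFinrank hatv_li (by simp), ?_, ?_, ?_⟩
    · intro i j
      rw [coe_basisOfLinearIndependentOfCardEqFinrank]
      rfl
    · intro i j hij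
      rw [coe_basisOfLinearIndependentOfCardEqFinrank, dotForm_apply]
      exact ortho_hatv i j hij
    · intro h
      have h1 := chain_range _ h
      rw [coe_basisOfLinearIndependentOfCardEqFinrank] at h1
      have : hatv 0 ∈ Set.range evec := h1 ▸ ⟨0, rfl⟩
      obtain ⟨i, hi⟩ := this
      exact hatv_ne_evec' i hi
  · intro c hc
    rw [chain_range c hc, basisFun_eq]
end

section
/- Let R be a commutative local ring with maximal ideal m. Every inner product space V over R admits an isometry V ≅ ⟨u₁⟩ ⊥ ⋯ ⊥ ⟨u_l⟩ ⊥ N₁ ⊥ ⋯ ⊥ N_r, where u₁,…,u_l ∈ R* and each Nᵢ is the rank-two inner product space with Gram matrix [[aᵢ, 1],[1, bᵢ]] for some aᵢ, bᵢ ∈ m. -/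
open Function TensorProduct

section Aux

variable {R : Type*} [CommRing R]

-- Lemma 1: gram det unit iff bijective
theorem gram_isUnit_iff {V : Type*} [AddCommGroup V] [Module R V]
    (B : LinearMap.BilinForm R V) {ι : Type*} [Fintype ι] [DecidableEq ι]
    (e : Module.Basis ι R V) :
    IsUnit (Matrix.of fun i j => B (e i) (e j)).det ↔ Function.Bijective B := by
  have hA : LinearMap.toMatrix e e.dualBasis B = (Matrix.of fun i j => B (e i) (e j)).transpose := by
    ext i j
    rw [LinearMap.toMatrix_apply, Module.Basis.dualBasis_repr]
    rfl
  constructor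
  · intro h
    have h' : IsUnit (LinearMap.toMatrix e e.dualBasis B).det := by
      rw [hA, Matrix.det_transpose]; exact h
    exact (LinearEquiv.ofIsUnitDet h').bijective
  · intro h
    let E := LinearEquiv.ofBijective B h
    have hcomp : (E.symm : Module.Dual R V →ₗ[R] V) ∘ₗ B = LinearMap.id := by
      ext x
      show E.symm (B x) = x
      exact E.symm_apply_apply x
    have : LinearMap.toMatrix e.dualBasis e (E.symm : Module.Dual R V →ₗ[R] V) *
        LinearMap.toMatrix e e.dualBasis B = 1 := by
      rw [← LinearMap.toMatrix_comp e e.dualBasis e, hcomp, LinearMap.toMatrix_id]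
    have := Matrix.isUnit_det_of_left_inverse this
    rwa [hA, Matrix.det_transpose] at this


theorem exists_isUnit_entry [IsLocalRing R] {n : ℕ} (hn : 0 < n)
    (M : Matrix (Fin n) (Fin n) R) (h : IsUnit M.det) : ∃ i j, IsUnit (M i j) := by
  by_contra hc
  push_neg at hc
  have hmem : ∀ i j, M i j ∈ IsLocalRing.maximalIdeal R := fun i j =>
    (IsLocalRing.mem_maximalIdeal _).mpr (hc i j)
  have hdet : M.det ∈ IsLocalRing.maximalIdeal R := by
    rw [Matrix.det_apply]
    refine Ideal.sum_mem _ fun σ _ => ?_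
    have i0 : Fin n := ⟨0, hn⟩
    have hprod : (∏ i, M (σ i) i) ∈ IsLocalRing.maximalIdeal R := by
      rw [← Finset.mul_prod_erase Finset.univ _ (Finset.mem_univ i0)]
      exact Ideal.mul_mem_right _ _ (hmem _ _)
    rw [Units.smul_def, zsmul_eq_mul]
    exact Ideal.mul_mem_left _ _ hprod
  exact (IsLocalRing.mem_maximalIdeal _).mp hdet h

theorem combine_basis {V : Type*} [AddCommGroup V] [Module R V]
    (B : LinearMap.BilinForm R V)
    {ι κ τ : Type*} [Fintype ι] [DecidableEq ι]
    (e' : Module.Basis (ι ⊕ κ) R V)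
    (g : Module.Basis τ R (Submodule.span R (Set.range fun j : κ => e' (Sum.inr j)))) :
    ∃ bas : Module.Basis (ι ⊕ τ) R V,
      (∀ i, bas (Sum.inl i) = e' (Sum.inl i)) ∧
      (∀ t, bas (Sum.inr t) = ↑(g t)) := by
  let W := Submodule.span R (Set.range fun j : κ => e' (Sum.inr j))
  have hli : LinearIndependent R fun j : κ => e' (Sum.inr j) :=
    e'.linearIndependent.comp Sum.inr Sum.inr_injective
  let f : Module.Basis κ R W := Module.Basis.span hli
  let pbf : Module.Basis (ι ⊕ κ) R ((ι → R) × W) := (Pi.basisFun R ι).prod f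
  let ψ : ((ι → R) × W) ≃ₗ[R] V := pbf.equiv e' (Equiv.refl _)
  have h0 : ∀ w : W, ψ (0, w) = (w : V) := by
    have : ψ.toLinearMap ∘ₗ LinearMap.inr R (ι → R) W = W.subtype := by
      refine f.ext fun j => ?_
      have h1 : (ψ.toLinearMap ∘ₗ LinearMap.inr R (ι → R) W) (f j) = ψ (pbf (Sum.inr j)) := by
        congr 1
        simp [pbf, Module.Basis.prod_apply, Pi.basisFun_apply]
      rw [h1, Module.Basis.equiv_apply, Equiv.refl_apply, Submodule.subtype_apply,
        Module.Basis.span_apply]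
    intro w
    exact LinearMap.congr_fun this w
  let pbg : Module.Basis (ι ⊕ τ) R ((ι → R) × W) := (Pi.basisFun R ι).prod g
  refine ⟨(pbg.map ψ), fun i => ?_, fun t => ?_⟩
  · rw [Module.Basis.map_apply]
    have : pbg (Sum.inl i) = pbf (Sum.inl i) := by
      simp [pbg, pbf, Module.Basis.prod_apply]
    rw [this]
    exact (pbf.equiv_apply _ e' (Equiv.refl _)).trans rfl
  · rw [Module.Basis.map_apply]
    have : pbg (Sum.inr t) = (0, g t) := by
      simp [pbg, Module.Basis.prod_apply]
    rw [this]
    exact h0 (g t)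


theorem orth_span' {V : Type*} [AddCommGroup V] [Module R V] (B : LinearMap.BilinForm R V)
    (x : V) {κ : Type*} (v : κ → V) (h : ∀ j, B x (v j) = 0) :
    ∀ y ∈ Submodule.span R (Set.range v), B x y = 0 := by
  intro y hy
  induction hy using Submodule.span_induction with
  | mem z hz => obtain ⟨j, rfl⟩ := hz; exact h j
  | zero => simp
  | add y z _ _ hy hz => simp [map_add, hy, hz]
  | smul r y _ hy => simp [map_smul, hy, smul_eq_mul]

def rhoA (l : ℕ) (Q : Type*) : (Fin 1 ⊕ (Fin l ⊕ Q)) ≃ (Fin (l+1) ⊕ Q) where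
  toFun := Sum.elim (fun _ => Sum.inl 0)
    (Sum.elim (fun i => Sum.inl i.succ) (fun q => Sum.inr q))
  invFun := Sum.elim (fun j => Fin.cases (Sum.inl 0) (fun i => Sum.inr (Sum.inl i)) j)
    (fun q => Sum.inr (Sum.inr q))
  left_inv := by
    rintro (x | (i | q)) <;> simp
    exact Subsingleton.elim (0 : Fin 1) x
  right_inv := by
    rintro (j | q)
    · exact Fin.cases rfl (fun i => by simp) j
    · rfl

@[simp] theorem rhoA_symm_inl_zero {l : ℕ} {Q : Type*} :
    (rhoA l Q).symm (Sum.inl 0) = Sum.inl 0 := by simp [rhoA]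

@[simp] theorem rhoA_symm_inl_succ {l : ℕ} {Q : Type*} (i : Fin l) :
    (rhoA l Q).symm (Sum.inl i.succ) = Sum.inr (Sum.inl i) := by simp [rhoA]

@[simp] theorem rhoA_symm_inr {l : ℕ} {Q : Type*} (q : Q) :
    (rhoA l Q).symm (Sum.inr q) = Sum.inr (Sum.inr q) := by simp [rhoA]

def rhoB (l r : ℕ) : (Fin 2 ⊕ (Fin l ⊕ Fin r × Fin 2)) ≃ (Fin l ⊕ Fin (r+1) × Fin 2) where
  toFun := Sum.elim (fun t => Sum.inr (0, t))
    (Sum.elim (fun i => Sum.inl i) (fun pq => Sum.inr (pq.1.succ, pq.2)))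
  invFun := Sum.elim (fun i => Sum.inr (Sum.inl i))
    (fun pq => Fin.cases (Sum.inl pq.2) (fun p' => Sum.inr (Sum.inr (p', pq.2))) pq.1)
  left_inv := by rintro (t | (i | ⟨p, s⟩)) <;> simp
  right_inv := by
    rintro (i | ⟨p, s⟩)
    · rfl
    · exact Fin.cases rfl (fun p' => by simp) p

@[simp] theorem rhoB_symm_inl {l r : ℕ} (i : Fin l) :
    (rhoB l r).symm (Sum.inl i) = Sum.inr (Sum.inl i) := by simp [rhoB]

@[simp] theorem rhoB_symm_inr_zero {l r : ℕ} (t : Fin 2) :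
    (rhoB l r).symm (Sum.inr (0, t)) = Sum.inl t := by simp [rhoB]

@[simp] theorem rhoB_symm_inr_succ {l r : ℕ} (p : Fin r) (t : Fin 2) :
    (rhoB l r).symm (Sum.inr (p.succ, t)) = Sum.inr (Sum.inr (p, t)) := by simp [rhoB]

set_option maxHeartbeats 1000000 in
theorem key_decomposition [IsLocalRing R] :
    ∀ (n : ℕ) {V : Type*} [AddCommGroup V] [Module R V] (B : LinearMap.BilinForm R V),
    (∀ x y, B x y = B y x) → ∀ (e : Module.Basis (Fin n) R V),
    IsUnit (Matrix.of fun i j => B (e i) (e j)).det →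
    ∃ (l r : ℕ) (u : Fin l → Rˣ) (a b : Fin r → R),
      (∀ i, a i ∈ IsLocalRing.maximalIdeal R) ∧
      (∀ i, b i ∈ IsLocalRing.maximalIdeal R) ∧
      ∃ bas : Module.Basis (Fin l ⊕ Fin r × Fin 2) R V,
        (∀ i j, B (bas (Sum.inl i)) (bas (Sum.inl j)) = if i = j then (u i : R) else 0) ∧
        (∀ i p, B (bas (Sum.inl i)) (bas (Sum.inr p)) = 0) ∧
        (∀ p i, B (bas (Sum.inr p)) (bas (Sum.inl i)) = 0) ∧
        (∀ p q : Fin r × Fin 2, B (bas (Sum.inr p)) (bas (Sum.inr q)) =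
          if p.1 = q.1 then !![a p.1, 1; 1, b p.1] p.2 q.2 else 0) := by
  intro n
  induction n using Nat.strong_induction_on with
  | _ n IH =>
  intro V _ _ B hsymm e hdet
  match n, e, hdet with
  | 0, e, hdet =>
    refine ⟨0, 0, Fin.elim0, Fin.elim0, Fin.elim0, fun i => i.elim0, fun i => i.elim0,
      e.reindex (Equiv.equivOfIsEmpty _ _), fun i => i.elim0, fun i => i.elim0,
      fun p => p.1.elim0, fun p => p.1.elim0⟩
  | (m+1), e, hdet =>
  have hbij : Function.Bijective B := (gram_isUnit_iff B e).mp hdet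
  by_cases hdiag : ∃ i, IsUnit (B (e i) (e i))
  · -- Case A : a diagonal unit
    obtain ⟨i, hiu⟩ := hdiag
    let e1 := e.reindex (Equiv.swap 0 i)
    have he1 : e1 0 = e i := by
      rw [Module.Basis.reindex_apply, Equiv.symm_swap, Equiv.swap_apply_left]
    let εA : Fin (m+1) ≃ (Fin 1 ⊕ Fin m) :=
      (finCongr (Nat.add_comm m 1)).trans finSumFinEquiv.symm
    let eS := e1.reindex εA
    have heS0 : eS (Sum.inl 0) = e i := by
      rw [Module.Basis.reindex_apply]
      have h0 : εA.symm (Sum.inl 0) = 0 := rfl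
      rw [h0, he1]
    set u₀ := hiu.unit with hu₀def
    have hu₀ : B (eS (Sum.inl 0)) (eS (Sum.inl 0)) = (u₀ : R) := by
      rw [heS0]; exact hiu.unit_spec.symm
    set c : Fin m → R := fun j => (↑u₀⁻¹ : R) * B (eS (Sum.inl 0)) (eS (Sum.inr j)) with hc
    let tt : Fin 1 ⊕ Fin m → V := Sum.elim (fun _ => eS (Sum.inl 0))
      (fun j => eS (Sum.inr j) - c j • eS (Sum.inl 0))
    let tt' : Fin 1 ⊕ Fin m → V := Sum.elim (fun _ => eS (Sum.inl 0))
      (fun j => eS (Sum.inr j) + c j • eS (Sum.inl 0))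
    let S : V →ₗ[R] V := eS.constr R tt
    let S' : V →ₗ[R] V := eS.constr R tt'
    have hSS' : S ∘ₗ S' = LinearMap.id := by
      refine eS.ext fun x => ?_
      rcases x with x | j
      · simp [S, S', tt, tt', Module.Basis.constr_basis]
        exact congrArg (fun y => eS (Sum.inl y)) (Subsingleton.elim (0 : Fin 1) x)
      · simp only [LinearMap.comp_apply, LinearMap.id_apply, S, S', Module.Basis.constr_basis,
          tt, tt', Sum.elim_inr, map_add, map_smul, Sum.elim_inl]
        abel
    have hS'S : S' ∘ₗ S = LinearMap.id := by
      refine eS.ext fun x => ?_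
      rcases x with x | j
      · simp [S, S', tt, tt', Module.Basis.constr_basis]
        exact congrArg (fun y => eS (Sum.inl y)) (Subsingleton.elim (0 : Fin 1) x)
      · simp only [LinearMap.comp_apply, LinearMap.id_apply, S, S', Module.Basis.constr_basis,
          tt, tt', Sum.elim_inr, map_sub, map_smul, Sum.elim_inl]
        abel
    let E : V ≃ₗ[R] V := LinearEquiv.ofLinear S S' hSS' hS'S
    let e' := eS.map E
    have he'l : ∀ x : Fin 1, e' (Sum.inl x) = eS (Sum.inl 0) := by
      intro x
      rw [Module.Basis.map_apply]
      show S (eS (Sum.inl x)) = _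
      rw [Module.Basis.constr_basis]
      rfl
    have he'r : ∀ j, e' (Sum.inr j) = eS (Sum.inr j) - c j • eS (Sum.inl 0) := by
      intro j
      rw [Module.Basis.map_apply]
      show S (eS (Sum.inr j)) = _
      rw [Module.Basis.constr_basis]
      rfl
    have horth : ∀ (x : Fin 1) j, B (e' (Sum.inl x)) (e' (Sum.inr j)) = 0 := by
      intro x j
      rw [he'l, he'r]
      simp only [map_sub, map_smul, smul_eq_mul, hu₀, hc]
      linear_combination (-(B (eS (Sum.inl 0)) (eS (Sum.inr j)))) * Units.inv_mul u₀
    have hval0 : ∀ x y : Fin 1, B (e' (Sum.inl x)) (e' (Sum.inl y)) = (u₀ : R) := by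
      intro x y; rw [he'l, he'l, hu₀]
    -- determinant of the lower block
    have hdet' : IsUnit (Matrix.of fun x y : Fin 1 ⊕ Fin m => B (e' x) (e' y)).det :=
      (gram_isUnit_iff B e').mpr hbij
    set M' : Matrix (Fin m) (Fin m) R :=
      Matrix.of (fun p q : Fin m => B (e' (Sum.inr p)) (e' (Sum.inr q))) with hM'
    have hblock : (Matrix.of fun x y : Fin 1 ⊕ Fin m => B (e' x) (e' y)) =
        Matrix.fromBlocks (Matrix.of fun x y : Fin 1 => B (e' (Sum.inl x)) (e' (Sum.inl y)))
          0 0 M' := by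
      ext x y
      rcases x with x | x <;> rcases y with y | y <;>
        simp [Matrix.fromBlocks, hM']
      · exact horth x y
      · exact (hsymm _ _).trans (horth y x)
    rw [hblock, Matrix.det_fromBlocks_zero₁₂] at hdet'
    have hMdet : IsUnit M'.det := isUnit_of_mul_isUnit_right hdet'
    -- the orthogonal complement
    have hliW : LinearIndependent R fun j : Fin m => e' (Sum.inr j) :=
      e'.linearIndependent.comp _ Sum.inr_injective
    set W := Submodule.span R (Set.range fun j : Fin m => e' (Sum.inr j)) with hWdef
    let f : Module.Basis (Fin m) R W := Module.Basis.span hliW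
    have hfval : ∀ j, (f j : V) = e' (Sum.inr j) := fun j => congrArg Subtype.val (Module.Basis.span_apply hliW j)
    have hsymm' : ∀ x y, (B.restrict W) x y = (B.restrict W) y x := fun x y => hsymm _ _
    have hdetW : IsUnit (Matrix.of fun p q : Fin m =>
        (B.restrict W) (f p) (f q)).det := by
      have heq : (Matrix.of fun p q : Fin m => (B.restrict W) (f p) (f q)) = M' := by
        ext p q
        simp only [Matrix.of_apply, LinearMap.BilinForm.restrict_apply,
          LinearMap.domRestrict_apply, hM', hfval]
      rw [heq]; exact hMdet
    obtain ⟨l, r, u, a, bb, ha, hb, bas'', hg1, hg2, hg3, hg4⟩ :=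
      IH m (by omega) (B.restrict W) hsymm' f hdetW
    obtain ⟨bas1, hbas1l, hbas1r⟩ := combine_basis (ι := Fin 1) B e' bas''
    have horthW : ∀ y ∈ W, ∀ x : Fin 1, B (e' (Sum.inl x)) y = 0 := by
      intro y hy x
      exact orth_span' B _ _ (fun j => horth x j) y hy
    have hmemW : ∀ t, (↑(bas'' t) : V) ∈ W := fun t => (bas'' t).2
    refine ⟨l+1, r, Fin.cases u₀ u, a, bb, ha, hb, bas1.reindex (rhoA l _), ?_, ?_, ?_, ?_⟩
    · intro p q
      refine Fin.cases ?_ (fun p' => ?_) p <;> refine Fin.cases ?_ (fun q' => ?_) q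
      · simp only [Module.Basis.reindex_apply, rhoA_symm_inl_zero, hbas1l, if_pos rfl,
          Fin.cases_zero]
        exact hval0 0 0
      · simp only [Module.Basis.reindex_apply, rhoA_symm_inl_zero, rhoA_symm_inl_succ, hbas1l,
          hbas1r]
        rw [if_neg (Fin.succ_ne_zero q').symm]
        exact horthW _ (hmemW _) 0
      · simp only [Module.Basis.reindex_apply, rhoA_symm_inl_zero, rhoA_symm_inl_succ, hbas1l,
          hbas1r]
        rw [if_neg (Fin.succ_ne_zero p')]
        exact (hsymm _ _).trans (horthW _ (hmemW _) 0)
      · simp only [Module.Basis.reindex_apply, rhoA_symm_inl_succ, hbas1r]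
        have := hg1 p' q'
        simp only [LinearMap.BilinForm.restrict_apply, LinearMap.domRestrict_apply] at this
        rw [this]
        by_cases h : p' = q'
        · subst h; simp
        · rw [if_neg h, if_neg (fun hh => h (Fin.succ_injective _ hh))]
    · intro p q
      refine Fin.cases ?_ (fun p' => ?_) p
      · simp only [Module.Basis.reindex_apply, rhoA_symm_inl_zero, rhoA_symm_inr, hbas1l, hbas1r]
        exact horthW _ (hmemW _) 0
      · simp only [Module.Basis.reindex_apply, rhoA_symm_inl_succ, rhoA_symm_inr, hbas1r]
        have := hg2 p' q
        simp only [LinearMap.BilinForm.restrict_apply, LinearMap.domRestrict_apply] at this; exact this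
    · intro p q
      refine Fin.cases ?_ (fun q' => ?_) q
      · simp only [Module.Basis.reindex_apply, rhoA_symm_inl_zero, rhoA_symm_inr, hbas1l, hbas1r]
        exact (hsymm _ _).trans (horthW _ (hmemW _) 0)
      · simp only [Module.Basis.reindex_apply, rhoA_symm_inl_succ, rhoA_symm_inr, hbas1r]
        have := hg3 p q'
        simp only [LinearMap.BilinForm.restrict_apply, LinearMap.domRestrict_apply] at this; exact this
    · intro p q
      simp only [Module.Basis.reindex_apply, rhoA_symm_inr, hbas1r]
      have := hg4 p q
      simp only [LinearMap.BilinForm.restrict_apply, LinearMap.domRestrict_apply] at this; exact this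
  · -- Case B : all diagonal entries in the maximal ideal
    rcases m with _ | m
    · exact absurd ⟨0, by simpa [Matrix.det_fin_one] using hdet⟩ hdiag
    push_neg at hdiag
    obtain ⟨i, j, hij⟩ := exists_isUnit_entry (n := m+2) (by omega)
      (Matrix.of fun i j => B (e i) (e j)) hdet
    rw [Matrix.of_apply] at hij
    have hne : i ≠ j := fun h => hdiag i (h ▸ hij)
    set j' : Fin (m+2) := Equiv.swap 0 i j with hj'def
    have hj'0 : j' ≠ 0 := by
      intro h
      apply hne
      have : Equiv.swap 0 i i = 0 := Equiv.swap_apply_right 0 i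
      exact ((Equiv.swap 0 i).injective (h.trans this.symm)).symm ▸ rfl
    have h01ne : (0 : Fin (m+2)) ≠ 1 := by simp [Fin.ext_iff]
    let π : Fin (m+2) ≃ Fin (m+2) := (Equiv.swap 1 j').trans (Equiv.swap 0 i)
    have hπ0 : π 0 = i := by
      show Equiv.swap 0 i (Equiv.swap 1 j' 0) = i
      rw [Equiv.swap_apply_of_ne_of_ne h01ne (Ne.symm hj'0), Equiv.swap_apply_left]
    have hπ1 : π 1 = j := by
      show Equiv.swap 0 i (Equiv.swap 1 j' 1) = j
      rw [Equiv.swap_apply_left, hj'def, Equiv.swap_apply_self]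
    let e1 := e.reindex π.symm
    have he10 : e1 0 = e i := by rw [Module.Basis.reindex_apply, Equiv.symm_symm, hπ0]
    have he11 : e1 1 = e j := by rw [Module.Basis.reindex_apply, Equiv.symm_symm, hπ1]
    set c : Rˣ := hij.unit with hcdef
    let wts : Fin (m+2) → Rˣ := fun k => if k = 1 then c⁻¹ else 1
    let e2 := e1.unitsSMul wts
    have he20 : e2 0 = e i := by
      rw [Module.Basis.unitsSMul_apply]
      simp [wts, h01ne, he10]
    have he21 : e2 1 = (↑c⁻¹ : R) • e j := by
      rw [Module.Basis.unitsSMul_apply]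
      simp [wts, he11, Units.smul_def]
    let εB : Fin (m+2) ≃ (Fin 2 ⊕ Fin m) :=
      (finCongr (Nat.add_comm m 2)).trans finSumFinEquiv.symm
    let eS := e2.reindex εB
    have heS0 : eS (Sum.inl 0) = e i := by
      rw [Module.Basis.reindex_apply]
      have h0 : εB.symm (Sum.inl 0) = 0 := by
        apply Fin.ext
        simp [εB]
      rw [h0, he20]
    have heS1 : eS (Sum.inl 1) = (↑c⁻¹ : R) • e j := by
      rw [Module.Basis.reindex_apply]
      have h1 : εB.symm (Sum.inl 1) = 1 := by
        apply Fin.ext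
        simp [εB]
      rw [h1, he21]
    set a₀ : R := B (eS (Sum.inl 0)) (eS (Sum.inl 0)) with ha₀def
    set b₀ : R := B (eS (Sum.inl 1)) (eS (Sum.inl 1)) with hb₀def
    have ha₀ : a₀ ∈ IsLocalRing.maximalIdeal R := by
      rw [ha₀def, heS0]
      exact (IsLocalRing.mem_maximalIdeal _).mpr (hdiag i)
    have hb₀ : b₀ ∈ IsLocalRing.maximalIdeal R := by
      rw [hb₀def, heS1]
      simp only [map_smul, LinearMap.smul_apply, smul_eq_mul]
      exact Ideal.mul_mem_left _ _ (Ideal.mul_mem_left _ _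
        ((IsLocalRing.mem_maximalIdeal _).mpr (hdiag j)))
    have h01 : B (eS (Sum.inl 0)) (eS (Sum.inl 1)) = 1 := by
      rw [heS0, heS1]
      simp only [map_smul, smul_eq_mul]
      rw [← hij.unit_spec, ← hcdef]
      exact Units.inv_mul c
    have h10 : B (eS (Sum.inl 1)) (eS (Sum.inl 0)) = 1 := (hsymm _ _).trans h01
    have hd : IsUnit (a₀ * b₀ - 1) := by
      have h1 : IsUnit (1 - a₀ * b₀) :=
        IsLocalRing.isUnit_one_sub_self_of_mem_nonunits _
          ((IsLocalRing.mem_maximalIdeal _).mp (Ideal.mul_mem_right _ _ ha₀))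
      have := h1.neg
      rwa [neg_sub] at this
    set du : Rˣ := hd.unit with hdudef
    have hrel : (↑du⁻¹ : R) * (a₀ * b₀ - 1) = 1 := by
      rw [← hd.unit_spec, ← hdudef]
      exact Units.inv_mul du
    set α : Fin m → R := fun z => (↑du⁻¹ : R) *
      (b₀ * B (eS (Sum.inl 0)) (eS (Sum.inr z)) - B (eS (Sum.inl 1)) (eS (Sum.inr z))) with hαdef
    set β : Fin m → R := fun z => (↑du⁻¹ : R) *
      (a₀ * B (eS (Sum.inl 1)) (eS (Sum.inr z)) - B (eS (Sum.inl 0)) (eS (Sum.inr z))) with hβdef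
    let tt : Fin 2 ⊕ Fin m → V := Sum.elim (fun t => eS (Sum.inl t))
      (fun z => eS (Sum.inr z) - α z • eS (Sum.inl 0) - β z • eS (Sum.inl 1))
    let tt' : Fin 2 ⊕ Fin m → V := Sum.elim (fun t => eS (Sum.inl t))
      (fun z => eS (Sum.inr z) + α z • eS (Sum.inl 0) + β z • eS (Sum.inl 1))
    let S : V →ₗ[R] V := eS.constr R tt
    let S' : V →ₗ[R] V := eS.constr R tt'
    have hSS' : S ∘ₗ S' = LinearMap.id := by
      refine eS.ext fun x => ?_
      rcases x with x | z
      · simp [S, S', tt, tt', Module.Basis.constr_basis]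
      · simp only [LinearMap.comp_apply, LinearMap.id_apply, S, S', Module.Basis.constr_basis,
          tt, tt', Sum.elim_inr, map_add, map_smul, Sum.elim_inl]
        abel
    have hS'S : S' ∘ₗ S = LinearMap.id := by
      refine eS.ext fun x => ?_
      rcases x with x | z
      · simp [S, S', tt, tt', Module.Basis.constr_basis]
      · simp only [LinearMap.comp_apply, LinearMap.id_apply, S, S', Module.Basis.constr_basis,
          tt, tt', Sum.elim_inr, map_sub, map_smul, Sum.elim_inl]
        abel
    let E : V ≃ₗ[R] V := LinearEquiv.ofLinear S S' hSS' hS'S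
    let e' := eS.map E
    have he'l : ∀ t : Fin 2, e' (Sum.inl t) = eS (Sum.inl t) := by
      intro t
      rw [Module.Basis.map_apply]
      show S (eS (Sum.inl t)) = _
      rw [Module.Basis.constr_basis]
      rfl
    have he'r : ∀ z, e' (Sum.inr z) =
        eS (Sum.inr z) - α z • eS (Sum.inl 0) - β z • eS (Sum.inl 1) := by
      intro z
      rw [Module.Basis.map_apply]
      show S (eS (Sum.inr z)) = _
      rw [Module.Basis.constr_basis]
      rfl
    have horth0 : ∀ z, B (e' (Sum.inl 0)) (e' (Sum.inr z)) = 0 := by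
      intro z
      rw [he'l, he'r]
      simp only [map_sub, map_smul, smul_eq_mul, ← ha₀def, h01, hαdef, hβdef]
      linear_combination (-(B (eS (Sum.inl 0)) (eS (Sum.inr z)))) * hrel
    have horth1 : ∀ z, B (e' (Sum.inl 1)) (e' (Sum.inr z)) = 0 := by
      intro z
      rw [he'l, he'r]
      simp only [map_sub, map_smul, smul_eq_mul, ← hb₀def, h10, hαdef, hβdef]
      linear_combination (-(B (eS (Sum.inl 1)) (eS (Sum.inr z)))) * hrel
    have horth : ∀ (t : Fin 2) z, B (e' (Sum.inl t)) (e' (Sum.inr z)) = 0 := by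
      intro t z
      fin_cases t
      · exact horth0 z
      · exact horth1 z
    -- determinant of the lower block
    have hdet' : IsUnit (Matrix.of fun x y : Fin 2 ⊕ Fin m => B (e' x) (e' y)).det :=
      (gram_isUnit_iff B e').mpr hbij
    set M' : Matrix (Fin m) (Fin m) R :=
      Matrix.of (fun p q : Fin m => B (e' (Sum.inr p)) (e' (Sum.inr q))) with hM'
    have hblock : (Matrix.of fun x y : Fin 2 ⊕ Fin m => B (e' x) (e' y)) =
        Matrix.fromBlocks (Matrix.of fun x y : Fin 2 => B (e' (Sum.inl x)) (e' (Sum.inl y)))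
          0 0 M' := by
      ext x y
      rcases x with x | x <;> rcases y with y | y <;>
        simp [Matrix.fromBlocks, hM']
      · exact horth x y
      · exact (hsymm _ _).trans (horth y x)
    rw [hblock, Matrix.det_fromBlocks_zero₁₂] at hdet'
    have hMdet : IsUnit M'.det := isUnit_of_mul_isUnit_right hdet'
    -- the orthogonal complement
    have hliW : LinearIndependent R fun z : Fin m => e' (Sum.inr z) :=
      e'.linearIndependent.comp _ Sum.inr_injective
    set W := Submodule.span R (Set.range fun z : Fin m => e' (Sum.inr z)) with hWdef
    let f : Module.Basis (Fin m) R W := Module.Basis.span hliW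
    have hfval : ∀ z, (f z : V) = e' (Sum.inr z) := fun z => congrArg Subtype.val (Module.Basis.span_apply hliW z)
    have hsymm' : ∀ x y, (B.restrict W) x y = (B.restrict W) y x := fun x y => hsymm _ _
    have hdetW : IsUnit (Matrix.of fun p q : Fin m =>
        (B.restrict W) (f p) (f q)).det := by
      have heq : (Matrix.of fun p q : Fin m => (B.restrict W) (f p) (f q)) = M' := by
        ext p q
        simp only [Matrix.of_apply, LinearMap.BilinForm.restrict_apply,
          LinearMap.domRestrict_apply, hM', hfval]
      rw [heq]; exact hMdet
    obtain ⟨l, r, u, a, bb, ha, hb, bas'', hg1, hg2, hg3, hg4⟩ :=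
      IH m (by omega) (B.restrict W) hsymm' f hdetW
    obtain ⟨bas1, hbas1l, hbas1r⟩ := combine_basis (ι := Fin 2) B e' bas''
    have horthW : ∀ y ∈ W, ∀ t : Fin 2, B (e' (Sum.inl t)) y = 0 := by
      intro y hy t
      exact orth_span' B _ _ (fun z => horth t z) y hy
    have hmemW : ∀ t, (↑(bas'' t) : V) ∈ W := fun t => (bas'' t).2
    -- the 2x2 block values
    have hblk : ∀ t s : Fin 2, B (e' (Sum.inl t)) (e' (Sum.inl s)) =
        !![a₀, 1; 1, b₀] t s := by
      intro t s
      rw [he'l, he'l]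
      fin_cases t <;> fin_cases s <;>
        simp [← ha₀def, ← hb₀def, h01, h10]
    refine ⟨l, r+1, u, Fin.cases a₀ a, Fin.cases b₀ bb, ?_, ?_,
      bas1.reindex (rhoB l r), ?_, ?_, ?_, ?_⟩
    · intro p
      refine Fin.cases ?_ (fun p' => ?_) p
      · simpa using ha₀
      · simpa using ha p'
    · intro p
      refine Fin.cases ?_ (fun p' => ?_) p
      · simpa using hb₀
      · simpa using hb p'
    · intro p q
      simp only [Module.Basis.reindex_apply, rhoB_symm_inl, hbas1r]
      have := hg1 p q
      simp only [LinearMap.BilinForm.restrict_apply, LinearMap.domRestrict_apply] at this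
      exact this
    · intro p q
      obtain ⟨q1, s⟩ := q
      induction q1 using Fin.cases with
      | zero =>
        simp only [Module.Basis.reindex_apply, rhoB_symm_inl, rhoB_symm_inr_zero, hbas1l, hbas1r]
        exact (hsymm _ _).trans (horthW _ (hmemW _) s)
      | succ q' =>
        simp only [Module.Basis.reindex_apply, rhoB_symm_inl, rhoB_symm_inr_succ, hbas1r]
        have := hg2 p (q', s)
        simp only [LinearMap.BilinForm.restrict_apply, LinearMap.domRestrict_apply] at this
        exact this
    · intro p q
      obtain ⟨p1, t⟩ := p
      induction p1 using Fin.cases with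
      | zero =>
        simp only [Module.Basis.reindex_apply, rhoB_symm_inl, rhoB_symm_inr_zero, hbas1l, hbas1r]
        exact horthW _ (hmemW _) t
      | succ p' =>
        simp only [Module.Basis.reindex_apply, rhoB_symm_inl, rhoB_symm_inr_succ, hbas1r]
        have := hg3 (p', t) q
        simp only [LinearMap.BilinForm.restrict_apply, LinearMap.domRestrict_apply] at this
        exact this
    · intro p q
      obtain ⟨p1, t⟩ := p
      obtain ⟨q1, s⟩ := q
      induction p1 using Fin.cases with
      | zero =>
        induction q1 using Fin.cases with
        | zero =>
          simp only [Module.Basis.reindex_apply, rhoB_symm_inr_zero, hbas1l]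
          rw [hblk t s]
          simp
        | succ q' =>
          simp only [Module.Basis.reindex_apply, rhoB_symm_inr_zero, rhoB_symm_inr_succ,
            hbas1l, hbas1r]
          rw [if_neg (by exact fun h => (Fin.succ_ne_zero q') h.symm)]
          exact horthW _ (hmemW _) t
      | succ p' =>
        induction q1 using Fin.cases with
        | zero =>
          simp only [Module.Basis.reindex_apply, rhoB_symm_inr_zero, rhoB_symm_inr_succ,
            hbas1l, hbas1r]
          rw [if_neg (Fin.succ_ne_zero p')]
          exact (hsymm _ _).trans (horthW _ (hmemW _) s)
        | succ q' =>
          simp only [Module.Basis.reindex_apply, rhoB_symm_inr_succ, hbas1r]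
          have := hg4 (p', t) (q', s)
          simp only [LinearMap.BilinForm.restrict_apply, LinearMap.domRestrict_apply] at this
          rw [this]
          by_cases h : p' = q'
          · subst h; simp
          · rw [if_neg h, if_neg (fun hh => h (Fin.succ_injective _ hh))]


end Aux

/-- Over a commutative local ring `(R, m)`, every inner product space `(V, B)` decomposes
as `⟨u₁⟩ ⊥ ⋯ ⊥ ⟨u_l⟩ ⊥ N₁ ⊥ ⋯ ⊥ N_r` with `uᵢ ∈ R*` and `Nᵢ` of rank two with Gram
matrix `[[aᵢ, 1], [1, bᵢ]]`, `aᵢ, bᵢ ∈ m`; equivalently, `V` has a basis whose Gram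
matrix has this block diagonal form. -/
theorem innerProductSpace_decomposition {R : Type*} [CommRing R] [IsLocalRing R]
    {V : Type*} [AddCommGroup V] [Module R V] (B : LinearMap.BilinForm R V)
    (hB : IsInnerProductSpace R V B) :
    ∃ (l r : ℕ) (u : Fin l → Rˣ) (a b : Fin r → R),
      (∀ i, a i ∈ IsLocalRing.maximalIdeal R) ∧
      (∀ i, b i ∈ IsLocalRing.maximalIdeal R) ∧
      ∃ bas : Module.Basis (Fin l ⊕ Fin r × Fin 2) R V,
        (∀ i j, B (bas (Sum.inl i)) (bas (Sum.inl j)) = if i = j then (u i : R) else 0) ∧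
        (∀ i p, B (bas (Sum.inl i)) (bas (Sum.inr p)) = 0) ∧
        (∀ p i, B (bas (Sum.inr p)) (bas (Sum.inl i)) = 0) ∧
        (∀ p q : Fin r × Fin 2, B (bas (Sum.inr p)) (bas (Sum.inr q)) =
          if p.1 = q.1 then !![a p.1, 1; 1, b p.1] p.2 q.2 else 0) := by
  haveI := hB.free
  haveI := hB.finite
  let e := (Module.Free.chooseBasis R V).reindex (Fintype.equivFin _)
  have hdet : IsUnit (Matrix.of fun i j => B (e i) (e j)).det :=
    (gram_isUnit_iff B e).mpr hB.nondegenerate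
  exact key_decomposition _ B hB.symm e hdet
end

section
/- Let R be a commutative local ring whose residue field F = R/m is not F₂, and let a, b, c, d ∈ R* be units such that the inner product spaces ⟨a,b⟩ and ⟨c,d⟩ over R are isometric. Then in the Milnor-Witt ring K₀^MW(R) the equality ⟨a⟩ + ⟨b⟩ = ⟨c⟩ + ⟨d⟩ holds. -/
open Function

/-- A square matrix over `R` of some size, i.e. a pair `⟨n, A⟩` with
`A : Matrix (Fin n) (Fin n) R`; a symmetric invertible such matrix is the Gram matrix
of an inner product space over `R`. -/
abbrev SigMat (R : Type*) [CommRing R] := Σ n : ℕ, Matrix (Fin n) (Fin n) R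

/-- Two Gram matrices define isometric bilinear form spaces iff they are congruent via
an invertible matrix. -/
def MatIsometric {R : Type*} [CommRing R] (A B : SigMat R) : Prop :=
  ∃ (P : Matrix (Fin A.1) (Fin B.1) R) (Q : Matrix (Fin B.1) (Fin A.1) R),
    P * Q = 1 ∧ Q * P = 1 ∧ B.2 = P.transpose * A.2 * P

/-- Gram matrix of the orthogonal sum of two spaces with Gram matrices `A`, `B`. -/
def matSum {R : Type*} [CommRing R] (A B : SigMat R) : SigMat R :=
  ⟨A.1 + B.1, (Matrix.fromBlocks A.2 0 0 B.2).submatrix finSumFinEquiv.symm finSumFinEquiv.symm⟩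

/-- Gram matrix of the tensor product of two spaces with Gram matrices `A`, `B`
(Kronecker product). -/
def matTensor {R : Type*} [CommRing R] (A B : SigMat R) : SigMat R :=
  ⟨A.1 * B.1,
    (Matrix.kroneckerMap (· * ·) A.2 B.2).submatrix finProdFinEquiv.symm finProdFinEquiv.symm⟩

/-- Inner product spaces over `R` (up to choosing a basis): symmetric invertible
Gram matrices of arbitrary size. -/
def IP (R : Type*) [CommRing R] := {A : SigMat R // A.2.IsSymm ∧ IsUnit A.2.det}

/-- The defining relations, in the free commutative ring on all inner product spaces over
`R`, of the Grothendieck-Witt ring: isometric spaces are identified, the class of an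
orthogonal sum is the sum of the classes, the class of a tensor product is the product of
the classes, and the class of `⟨1⟩` is the unit. -/
def gwRels (R : Type*) [CommRing R] : Set (FreeCommRing (IP R)) :=
  {x | (∃ a b : IP R, MatIsometric a.1 b.1 ∧
          x = FreeCommRing.of a - FreeCommRing.of b) ∨
       (∃ a b c : IP R, MatIsometric c.1 (matSum a.1 b.1) ∧
          x = FreeCommRing.of c - FreeCommRing.of a - FreeCommRing.of b) ∨
       (∃ a b c : IP R, MatIsometric c.1 (matTensor a.1 b.1) ∧
          x = FreeCommRing.of c - FreeCommRing.of a * FreeCommRing.of b) ∨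
       (∃ a : IP R, MatIsometric a.1 ⟨1, 1⟩ ∧ x = FreeCommRing.of a - 1)}

/-- The Grothendieck-Witt ring `GW(R)` of non-degenerate symmetric bilinear forms over
`R`: the Grothendieck ring of the monoid of isometry classes of inner product spaces
over `R` under orthogonal sum, with multiplication induced by the tensor product. -/
abbrev GW (R : Type*) [CommRing R] := FreeCommRing (IP R) ⧸ Ideal.span (gwRels R)

/-- The diagonal inner product space `⟨u₁, …, uₙ⟩` over `R`, for units `uᵢ ∈ R*`. -/
def diagIP (R : Type*) [CommRing R] {n : ℕ} (u : Fin n → Rˣ) : IP R :=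
  ⟨⟨n, Matrix.diagonal fun i => (u i : R)⟩, Matrix.isSymm_diagonal _, by
    have h : ((∏ i, u i : Rˣ) : R) = ∏ i, (u i : R) :=
      map_prod (Units.coeHom R) u Finset.univ
    rw [Matrix.det_diagonal, ← h]
    exact (∏ i, u i).isUnit⟩

/-- The class in `GW(R)` of the rank one inner product space `⟨u⟩`, `u ∈ R*`. -/
noncomputable def gwClass (R : Type*) [CommRing R] (u : Rˣ) : GW R :=
  Ideal.Quotient.mk _ (FreeCommRing.of (diagIP R ![u]))

/-- The ideal of the Milnor-Witt relations in the group ring `ℤ[R*]`: it is generated by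
`⟨⟨a²⟩⟩ = 1 - ⟨a²⟩` for `a ∈ R*`, by `⟨⟨a⟩⟩ ⬝ h = (1 - ⟨a⟩)(⟨1⟩ + ⟨-1⟩)` for `a ∈ R*`,
and by the Steinberg relations `⟨⟨a⟩⟩ ⬝ ⟨⟨1-a⟩⟩` for `a, 1 - a ∈ R*`. -/
noncomputable def kmwIdeal (R : Type*) [CommRing R] : Ideal (MonoidAlgebra ℤ Rˣ) :=
  Ideal.span
    {x | (∃ a : Rˣ, x = 1 - MonoidAlgebra.of ℤ Rˣ (a ^ 2)) ∨
         (∃ a : Rˣ, x = (1 - MonoidAlgebra.of ℤ Rˣ a) *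
            (MonoidAlgebra.of ℤ Rˣ 1 + MonoidAlgebra.of ℤ Rˣ (-1))) ∨
         (∃ a b : Rˣ, (a : R) + (b : R) = 1 ∧
            x = (1 - MonoidAlgebra.of ℤ Rˣ a) * (1 - MonoidAlgebra.of ℤ Rˣ b))}

/-- The zeroth Milnor-Witt K-group `K₀^MW(R)`: the quotient of the group ring `ℤ[R*]`
by the Milnor-Witt relations. -/
abbrev KMW (R : Type*) [CommRing R] := MonoidAlgebra ℤ Rˣ ⧸ kmwIdeal R

/-- The class of the generator `⟨a⟩`, `a ∈ R*`, in `K₀^MW(R)`. -/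
noncomputable def kmwClass (R : Type*) [CommRing R] (a : Rˣ) : KMW R :=
  Ideal.Quotient.mk _ (MonoidAlgebra.of ℤ Rˣ a)


section KMWAux

open IsLocalRing

variable {R : Type*} [CommRing R]

private lemma kc_mul (u v : Rˣ) :
    kmwClass R (u * v) = kmwClass R u * kmwClass R v := by
  unfold kmwClass
  rw [map_mul, map_mul]

private lemma kc_one : kmwClass R 1 = 1 := by
  unfold kmwClass
  rw [map_one, map_one]

private lemma kc_sq (u : Rˣ) : kmwClass R (u ^ 2) = 1 := by
  have hmem : (1 - MonoidAlgebra.of ℤ Rˣ (u ^ 2)) ∈ kmwIdeal R :=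
    Ideal.subset_span (Or.inl ⟨u, rfl⟩)
  have h0 : Ideal.Quotient.mk (kmwIdeal R) (1 - MonoidAlgebra.of ℤ Rˣ (u ^ 2)) = 0 :=
    Ideal.Quotient.eq_zero_iff_mem.mpr hmem
  rw [map_sub, map_one, sub_eq_zero] at h0
  unfold kmwClass
  exact h0.symm

private lemma kc_sq_mul (u v : Rˣ) : kmwClass R (u * v ^ 2) = kmwClass R u := by
  rw [kc_mul, kc_sq]; ring

private lemma kc_h (u : Rˣ) :
    (1 - kmwClass R u) * (1 + kmwClass R (-1)) = 0 := by
  have hmem : ((1 - MonoidAlgebra.of ℤ Rˣ u) *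
      (MonoidAlgebra.of ℤ Rˣ 1 + MonoidAlgebra.of ℤ Rˣ (-1))) ∈ kmwIdeal R :=
    Ideal.subset_span (Or.inr (Or.inl ⟨u, rfl⟩))
  have h0 := Ideal.Quotient.eq_zero_iff_mem.mpr hmem
  rw [map_mul, map_sub, map_add, map_one] at h0
  have h1 : Ideal.Quotient.mk (kmwIdeal R) (MonoidAlgebra.of ℤ Rˣ 1) = 1 := by
    rw [map_one (MonoidAlgebra.of ℤ Rˣ), map_one]
  rw [h1] at h0
  exact h0

private lemma kc_st (u v : Rˣ) (h : (u : R) + (v : R) = 1) :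
    (1 - kmwClass R u) * (1 - kmwClass R v) = 0 := by
  have hmem : ((1 - MonoidAlgebra.of ℤ Rˣ u) * (1 - MonoidAlgebra.of ℤ Rˣ v)) ∈ kmwIdeal R :=
    Ideal.subset_span (Or.inr (Or.inr ⟨u, v, h, rfl⟩))
  have h0 := Ideal.Quotient.eq_zero_iff_mem.mpr hmem
  rw [map_mul, map_sub, map_sub, map_one] at h0
  unfold kmwClass
  exact h0

private lemma kc_pair (u : Rˣ) :
    kmwClass R u + kmwClass R (-u) = 1 + kmwClass R (-1) := by
  have h := kc_h (R := R) u
  have hmu : kmwClass R (-u) = kmwClass R u * kmwClass R (-1) := by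
    rw [← kc_mul]
    congr 1
    exact (mul_neg_one u).symm
  linear_combination hmu - h

private lemma kc_d1 (u v w : Rˣ) (h : (u : R) + (v : R) = (w : R)) :
    kmwClass R u + kmwClass R v = kmwClass R w + kmwClass R (u * v * w) := by
  have hst := kc_st (u * w⁻¹) (v * w⁻¹) (by
    push_cast
    linear_combination (((w⁻¹ : Rˣ) : R)) * h + Units.mul_inv w)
  have e1 : kmwClass R (u * w⁻¹) = kmwClass R (u * w) := by
    rw [show u * w⁻¹ = (u * w) * (w⁻¹) ^ 2 by group, kc_sq_mul]
  have e2 : kmwClass R (v * w⁻¹) = kmwClass R (v * w) := by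
    rw [show v * w⁻¹ = (v * w) * (w⁻¹) ^ 2 by group, kc_sq_mul]
  rw [e1, e2] at hst
  have e3 : kmwClass R (u * w) * kmwClass R (v * w) = kmwClass R (u * v) := by
    rw [← kc_mul, show (u * w) * (v * w) = (u * v) * w ^ 2 by
      rw [pow_two]; exact mul_mul_mul_comm u w v w, kc_sq_mul]
  have e4 : kmwClass R (u * w) * kmwClass R w = kmwClass R u := by
    rw [← kc_mul, show (u * w) * w = u * w ^ 2 by rw [pow_two, mul_assoc], kc_sq_mul]
  have e5 : kmwClass R (v * w) * kmwClass R w = kmwClass R v := by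
    rw [← kc_mul, show (v * w) * w = v * w ^ 2 by rw [pow_two, mul_assoc], kc_sq_mul]
  have e6 : kmwClass R (u * v) * kmwClass R w = kmwClass R (u * v * w) := by
    rw [← kc_mul]
  linear_combination (-(kmwClass R w)) * hst - e4 - e5 + (kmwClass R w) * e3 + e6

private lemma isUnit_add_of_mem_max [IsLocalRing R] {x y : R}
    (hx : IsUnit x) (hy : y ∈ maximalIdeal R) : IsUnit (x + y) := by
  by_contra hxy
  have h1 : x + y ∈ maximalIdeal R := by
    rwa [mem_maximalIdeal, mem_nonunits_iff]
  have h2 : x ∈ maximalIdeal R := by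
    have := (maximalIdeal R).sub_mem h1 hy
    simpa using this
  rw [mem_maximalIdeal, mem_nonunits_iff] at h2
  exact h2 hx

private lemma isUnit_two_of_forall [IsLocalRing R]
    (hF : Nat.card (IsLocalRing.ResidueField R) ≠ 2) (a b : Rˣ)
    (H : ∀ t : Rˣ, ¬ IsUnit ((a : R) + (b : R) * (t : R) ^ 2)) :
    IsUnit (2 : R) := by
  by_contra h2
  apply hF
  have h2m : (2 : R) ∈ maximalIdeal R := by rwa [mem_maximalIdeal, mem_nonunits_iff]
  have hmem : ∀ t : Rˣ, (a : R) + (b : R) * (t : R) ^ 2 ∈ maximalIdeal R := by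
    intro t
    rw [mem_maximalIdeal, mem_nonunits_iff]
    exact H t
  have key : ∀ z : ResidueField R, z = 0 ∨ z = 1 := by
    intro z
    by_cases hz : z = 0
    · exact Or.inl hz
    right
    obtain ⟨r, hr⟩ := Ideal.Quotient.mk_surjective z
    have hru : IsUnit r := by
      by_contra hrn
      apply hz
      rw [← hr]
      exact Ideal.Quotient.eq_zero_iff_mem.mpr (by rwa [← mem_nonunits_iff, ← mem_maximalIdeal] at hrn)
    obtain ⟨t, ht⟩ := hru
    have hbt : (b : R) * ((t : R) ^ 2 - 1) ∈ maximalIdeal R := by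
      have hsub := (maximalIdeal R).sub_mem (hmem t) (hmem 1)
      have e : ((a : R) + (b : R) * (t : R) ^ 2) - ((a : R) + (b : R) * ((1 : Rˣ) : R) ^ 2)
          = (b : R) * ((t : R) ^ 2 - 1) := by
        push_cast
        ring
      rwa [e] at hsub
    have htm : ((t : R) ^ 2 - 1) ∈ maximalIdeal R := by
      have hmul := Ideal.mul_mem_left _ (((b⁻¹ : Rˣ) : R)) hbt
      have e : ((b⁻¹ : Rˣ) : R) * ((b : R) * ((t : R) ^ 2 - 1)) = ((t : R) ^ 2 - 1) := by
        rw [← mul_assoc, ← Units.val_mul, inv_mul_cancel, Units.val_one, one_mul]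
      rwa [e] at hmul
    have hz1 : z ^ 2 = 1 := by
      have h0 : (Ideal.Quotient.mk (maximalIdeal R)) ((t : R) ^ 2 - 1) = 0 :=
        Ideal.Quotient.eq_zero_iff_mem.mpr htm
      rw [map_sub, map_one, map_pow, sub_eq_zero] at h0
      rw [← hr, ← ht]
      exact h0
    have h20 : (2 : ResidueField R) = 0 := by
      have h0 : (Ideal.Quotient.mk (maximalIdeal R)) (2 : R) = 0 :=
        Ideal.Quotient.eq_zero_iff_mem.mpr h2m
      rw [map_ofNat] at h0
      exact h0
    have hz3 : (z - 1) ^ 2 = 0 := by linear_combination hz1 + (1 - z) * h20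
    have hz4 : z - 1 = 0 := by
      exact pow_eq_zero_iff (two_ne_zero) |>.mp hz3
    exact sub_eq_zero.mp hz4
  rw [Nat.card_eq_two_iff]
  refine ⟨0, 1, zero_ne_one, ?_⟩
  ext z
  simp only [Set.mem_insert_iff, Set.mem_singleton_iff, Set.mem_univ, iff_true]
  exact key z

private lemma kc_claimB [IsLocalRing R]
    (hF : Nat.card (IsLocalRing.ResidueField R) ≠ 2)
    (a b c : Rˣ) (p q : R) (hp : IsUnit p)
    (h : (a : R) * p ^ 2 + (b : R) * q ^ 2 = (c : R)) :
    kmwClass R a + kmwClass R b = kmwClass R c + kmwClass R (a * b * c) := by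
  have hPs : ((hp.unit : Rˣ) : R) = p := hp.unit_spec
  set PU := hp.unit with hPUdef
  by_cases hq : IsUnit q
  · have hQs : ((hq.unit : Rˣ) : R) = q := hq.unit_spec
    set QU := hq.unit with hQUdef
    have E := kc_d1 (a * PU ^ 2) (b * QU ^ 2) c (by push_cast; rw [hPs, hQs]; exact h)
    rw [kc_sq_mul, kc_sq_mul] at E
    rw [show (a * PU ^ 2) * (b * QU ^ 2) * c = (a * b * c) * (PU * QU) ^ 2 from
      Units.ext (by push_cast; ring), kc_sq_mul] at E
    exact E
  · have hqm : q ∈ maximalIdeal R := by rwa [mem_maximalIdeal, mem_nonunits_iff]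
    by_cases hex : ∃ t : Rˣ, IsUnit ((a : R) + (b : R) * (t : R) ^ 2)
    · obtain ⟨t, hxu⟩ := hex
      have hXs : ((hxu.unit : Rˣ) : R) = (a : R) + (b : R) * (t : R) ^ 2 := hxu.unit_spec
      set X := hxu.unit with hXdef
      have hα : IsUnit ((a : R) * p + (b : R) * q * (t : R)) :=
        isUnit_add_of_mem_max (a.isUnit.mul hp)
          (Ideal.mul_mem_right _ _ (Ideal.mul_mem_left _ _ hqm))
      have hβ : IsUnit (p * (t : R) - q) := by
        have h1 := isUnit_add_of_mem_max (hp.mul t.isUnit) ((maximalIdeal R).neg_mem hqm)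
        rwa [← sub_eq_add_neg] at h1
      have hAs : ((hα.unit : Rˣ) : R) = (a : R) * p + (b : R) * q * (t : R) := hα.unit_spec
      have hBs : ((hβ.unit : Rˣ) : R) = p * (t : R) - q := hβ.unit_spec
      set A1 := hα.unit with hA1def
      set B1 := hβ.unit with hB1def
      have E1 := kc_d1 a (b * t ^ 2) X (by push_cast; rw [hXs])
      rw [kc_sq_mul] at E1
      rw [show a * (b * t ^ 2) * X = (a * b * X) * t ^ 2 from
        Units.ext (by push_cast; ring), kc_sq_mul] at E1
      have E2 := kc_d1 (X * A1 ^ 2) ((a * b * X) * B1 ^ 2) (c * X ^ 2) (by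
        push_cast
        rw [hXs, hAs, hBs]
        linear_combination ((a : R) + (b : R) * (t : R) ^ 2) ^ 2 * h)
      rw [kc_sq_mul, kc_sq_mul, kc_sq_mul] at E2
      rw [show (X * A1 ^ 2) * ((a * b * X) * B1 ^ 2) * (c * X ^ 2)
          = (a * b * c) * (A1 * B1 * X ^ 2) ^ 2 from Units.ext (by push_cast; ring),
        kc_sq_mul] at E2
      exact E1.trans E2
    · push_neg at hex
      have h2 : IsUnit (2 : R) := isUnit_two_of_forall hF a b hex
      have hab : (a : R) + (b : R) ∈ maximalIdeal R := by
        rw [mem_maximalIdeal, mem_nonunits_iff]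
        have h1 := hex 1
        simpa using h1
      have hamb : IsUnit ((a : R) - (b : R)) := by
        have h2b : IsUnit ((2 : R) * (b : R)) := h2.mul b.isUnit
        have h1 := isUnit_add_of_mem_max h2b ((maximalIdeal R).neg_mem hab)
        have e : (2 : R) * (b : R) + (-((a : R) + (b : R))) = (b : R) - (a : R) := by ring
        rw [e] at h1
        simpa [neg_sub] using h1.neg
      have hRu : IsUnit ((c : R) - (b : R) * p ^ 2) := by
        have e : (c : R) - (b : R) * p ^ 2 = ((a : R) - (b : R)) * p ^ 2 + (b : R) * q ^ 2 := by
          linear_combination -h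
        rw [e]
        exact isUnit_add_of_mem_max (hamb.mul (hp.pow 2))
          (Ideal.mul_mem_left _ _ (Ideal.pow_mem_of_mem _ hqm 2 (by norm_num)))
      have hXu : IsUnit ((c : R) - (b : R) * p * q) := by
        have h1 := isUnit_add_of_mem_max c.isUnit
          ((maximalIdeal R).neg_mem (Ideal.mul_mem_left _ ((b : R) * p) hqm))
        rwa [← sub_eq_add_neg] at h1
      have hYu : IsUnit (q - p) := by
        have h1 := isUnit_add_of_mem_max hp.neg hqm
        rwa [show -p + q = q - p by ring] at h1
      have hRs : ((hRu.unit : Rˣ) : R) = (c : R) - (b : R) * p ^ 2 := hRu.unit_spec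
      have hXs : ((hXu.unit : Rˣ) : R) = (c : R) - (b : R) * p * q := hXu.unit_spec
      have hYs : ((hYu.unit : Rˣ) : R) = q - p := hYu.unit_spec
      set R1 := hRu.unit with hR1def
      set X1 := hXu.unit with hX1def
      set Y1 := hYu.unit with hY1def
      have E1 := kc_d1 (-(a * b) * PU ^ 2) (a * c) (a * R1) (by
        push_cast
        rw [hPs, hRs]
        ring)
      rw [kc_sq_mul] at E1
      rw [show -(a * b) * PU ^ 2 * (a * c) * (a * R1) = -(a * b * c * R1) * (a * PU) ^ 2 from
        Units.ext (by push_cast; ring), kc_sq_mul] at E1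
      have E2 := kc_d1 (X1 ^ 2) (-(b * c) * Y1 ^ 2) ((a * R1) * PU ^ 2) (by
        push_cast
        rw [hXs, hYs, hRs, hPs]
        linear_combination (-((c : R) - (b : R) * p ^ 2)) * h)
      rw [kc_sq, kc_sq_mul, kc_sq_mul] at E2
      rw [show X1 ^ 2 * (-(b * c) * Y1 ^ 2) * ((a * R1) * PU ^ 2)
          = -(a * b * c * R1) * (X1 * Y1 * PU) ^ 2 from Units.ext (by push_cast; ring),
        kc_sq_mul] at E2
      have hstar : kmwClass R (-(a * b)) + kmwClass R (a * c)
          = 1 + kmwClass R (-(b * c)) := by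
        linear_combination E1 - E2
      have haux1 : kmwClass R a * kmwClass R (-(a * b)) = kmwClass R (-b) := by
        rw [← kc_mul, show a * -(a * b) = -b * a ^ 2 from Units.ext (by push_cast; ring),
          kc_sq_mul]
      have haux2 : kmwClass R a * kmwClass R (a * c) = kmwClass R c := by
        rw [← kc_mul, show a * (a * c) = c * a ^ 2 from Units.ext (by push_cast; ring),
          kc_sq_mul]
      have haux3 : kmwClass R a * kmwClass R (-(b * c)) = kmwClass R (-(a * b * c)) := by
        rw [← kc_mul]
        congr 1
        exact Units.ext (by push_cast; ring)
      have hp1 := kc_pair (R := R) b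
      have hp2 := kc_pair (R := R) (a * b * c)
      linear_combination (-(kmwClass R a)) * hstar + haux1 + haux2 - haux3 + hp1 - hp2

end KMWAux

/-- Let `R` be a commutative local ring whose residue field is not `𝔽₂` and let
`a, b, c, d ∈ R*` be units such that the inner product spaces `⟨a, b⟩` and `⟨c, d⟩` over
`R` are isometric.  Then `⟨a⟩ + ⟨b⟩ = ⟨c⟩ + ⟨d⟩` in `K₀^MW(R)`. -/
theorem kmw_diag_rel (R : Type*) [CommRing R] [IsLocalRing R]
    (hF : Nat.card (IsLocalRing.ResidueField R) ≠ 2) (a b c d : Rˣ)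
    (h : MatIsometric (diagIP R ![a, b]).1 (diagIP R ![c, d]).1) :
    kmwClass R a + kmwClass R b = kmwClass R c + kmwClass R d := by
  classical
  open IsLocalRing in
  obtain ⟨P0, Q0, hPQ0, hQP0, hB0⟩ := h
  let Pm : Matrix (Fin 2) (Fin 2) R := P0
  let Qm : Matrix (Fin 2) (Fin 2) R := Q0
  have hPQ : Pm * Qm = 1 := hPQ0
  have hB : (Matrix.diagonal (fun i => ((![c, d] i : Rˣ) : R)) : Matrix (Fin 2) (Fin 2) R)
      = Pm.transpose * Matrix.diagonal (fun i => ((![a, b] i : Rˣ) : R)) * Pm := hB0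
  have h00 : (a : R) * (Pm 0 0) ^ 2 + (b : R) * (Pm 1 0) ^ 2 = (c : R) := by
    have h0 := congrFun (congrFun hB 0) 0
    simp [Matrix.mul_apply, Matrix.diagonal, Matrix.transpose_apply, Fin.sum_univ_two] at h0
    linear_combination -h0
  have hdet : (c : R) * (d : R) = (a : R) * (b : R) * (Pm.det) ^ 2 := by
    have hd0 := congrArg Matrix.det hB
    rw [Matrix.det_mul, Matrix.det_mul, Matrix.det_transpose, Matrix.det_diagonal,
      Matrix.det_diagonal, Fin.prod_univ_two, Fin.prod_univ_two] at hd0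
    simp only [Matrix.cons_val_zero, Matrix.cons_val_one, Matrix.head_cons] at hd0
    linear_combination hd0
  have hΔ : IsUnit Pm.det :=
    IsUnit.of_mul_eq_one Qm.det (by rw [← Matrix.det_mul, hPQ, Matrix.det_one])
  have hpq : IsUnit (Pm 0 0) ∨ IsUnit (Pm 1 0) := by
    by_contra hc
    push_neg at hc
    obtain ⟨h1, h2⟩ := hc
    have hm1 : Pm 0 0 ∈ IsLocalRing.maximalIdeal R := by
      rwa [IsLocalRing.mem_maximalIdeal, mem_nonunits_iff]
    have hm2 : Pm 1 0 ∈ IsLocalRing.maximalIdeal R := by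
      rwa [IsLocalRing.mem_maximalIdeal, mem_nonunits_iff]
    have hcm : (c : R) ∈ IsLocalRing.maximalIdeal R := by
      rw [← h00]
      exact add_mem
        (Ideal.mul_mem_left _ _ (Ideal.pow_mem_of_mem _ hm1 2 (by norm_num)))
        (Ideal.mul_mem_left _ _ (Ideal.pow_mem_of_mem _ hm2 2 (by norm_num)))
    rw [IsLocalRing.mem_maximalIdeal, mem_nonunits_iff] at hcm
    exact hcm c.isUnit
  have hmain : kmwClass R a + kmwClass R b = kmwClass R c + kmwClass R (a * b * c) := by
    rcases hpq with hp | hq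
    · exact kc_claimB hF a b c _ _ hp h00
    · have h00' : (b : R) * (Pm 1 0) ^ 2 + (a : R) * (Pm 0 0) ^ 2 = (c : R) := by
        linear_combination h00
      have hswap := kc_claimB hF b a c _ _ hq h00'
      rw [show b * a * c = a * b * c from Units.ext (by push_cast; ring)] at hswap
      linear_combination hswap
  have hΔs : ((hΔ.unit : Rˣ) : R) = Pm.det := hΔ.unit_spec
  have hdu : kmwClass R c * kmwClass R d = kmwClass R a * kmwClass R b := by
    have hcd : c * d = (a * b) * hΔ.unit ^ 2 :=
      Units.ext (by push_cast; rw [hΔs]; linear_combination hdet)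
    calc kmwClass R c * kmwClass R d = kmwClass R (c * d) := (kc_mul _ _).symm
      _ = kmwClass R ((a * b) * hΔ.unit ^ 2) := by rw [hcd]
      _ = kmwClass R (a * b) := kc_sq_mul _ _
      _ = kmwClass R a * kmwClass R b := kc_mul _ _
  have hd_abc : kmwClass R d = kmwClass R (a * b * c) := by
    have hc2 : kmwClass R c * kmwClass R c = 1 := by
      rw [← kc_mul, show c * c = (1 : Rˣ) * c ^ 2 from Units.ext (by push_cast; ring),
        kc_sq_mul, kc_one]
    calc kmwClass R d = (kmwClass R c * kmwClass R c) * kmwClass R d := by rw [hc2]; ring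
      _ = kmwClass R c * (kmwClass R c * kmwClass R d) := by ring
      _ = kmwClass R c * (kmwClass R a * kmwClass R b) := by rw [hdu]
      _ = kmwClass R c * kmwClass R (a * b) := by rw [kc_mul]
      _ = kmwClass R (c * (a * b)) := (kc_mul _ _).symm
      _ = kmwClass R (a * b * c) := by rw [mul_comm]
  rw [hmain, hd_abc]
end

section
/- Let R be a commutative local ring whose residue field F = R/m is neither F₂ nor F₃. Then for all a ∈ R*, the following identities hold in the ring K̃₀^MW(R): (1) ⟨⟨a⟩⟩ · ⟨⟨−a⟩⟩ = 0; (2) ⟨⟨a²⟩⟩ = ⟨⟨a⟩⟩ · h. -/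
/-- The ideal of the Steinberg relations `⟨⟨a⟩⟩ ⬝ ⟨⟨1-a⟩⟩ = (1 - ⟨a⟩)(1 - ⟨1-a⟩)` for
`a, 1 - a ∈ R*`, in the group ring `ℤ[R*]`. -/
noncomputable def steinbergIdeal (R : Type*) [CommRing R] : Ideal (MonoidAlgebra ℤ Rˣ) :=
  Ideal.span
    {x | ∃ a b : Rˣ, (a : R) + (b : R) = 1 ∧
      x = (1 - MonoidAlgebra.of ℤ Rˣ a) * (1 - MonoidAlgebra.of ℤ Rˣ b)}

/-- The ring `K̃₀^MW(R)`: the quotient of the group ring `ℤ[R*]` by the Steinberg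
relations only. -/
abbrev KMWTilde (R : Type*) [CommRing R] := MonoidAlgebra ℤ Rˣ ⧸ steinbergIdeal R

/-- Auxiliary identity in a commutative ring. -/
private lemma kmw_ring_key {A : Type*} [CommRing A] (x y ε : A) (hε : ε * ε = 1)
    (h1 : (1 - x) * (1 - ε * x) = 0) (h2 : (1 - y) * (1 - ε * y) = 0)
    (h3 : (x - y) * (x - ε * y) = 0) : (1 - x * y) * (1 - ε * (x * y)) = 0 := by
  linear_combination (1 + y ^ 2) * h1 + (x + x * ε) * h2 + (-ε) * h3 +
    (y ^ 2 - x * y ^ 2) * hε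

/-- The Steinberg relations vanish in the quotient. -/
private lemma kmw_st {R : Type*} [CommRing R] (u v : Rˣ) (h : (u : R) + (v : R) = 1) :
    Ideal.Quotient.mk (steinbergIdeal R)
      ((1 - MonoidAlgebra.of ℤ Rˣ u) * (1 - MonoidAlgebra.of ℤ Rˣ v)) = 0 := by
  rw [Ideal.Quotient.eq_zero_iff_mem]
  exact Ideal.subset_span ⟨u, v, h, rfl⟩

/-- The relation `⟨⟨u⟩⟩⟨⟨-u⟩⟩ = 0` when `1 - u` is a unit. -/
private lemma kmw_caseA {R : Type*} [CommRing R] (u : Rˣ) (hu : IsUnit (1 - (u : R))) :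
    Ideal.Quotient.mk (steinbergIdeal R)
      ((1 - MonoidAlgebra.of ℤ Rˣ u) * (1 - MonoidAlgebra.of ℤ Rˣ (-u))) = 0 := by
  set v : Rˣ := hu.unit with hvdef
  have hv : (v : R) = 1 - (u : R) := hu.unit_spec
  set w : Rˣ := -u⁻¹ * v with hwdef
  have hw : (w : R) = -((u⁻¹ : Rˣ) : R) * (1 - (u : R)) := by
    rw [hwdef, Units.val_mul, Units.val_neg, hv]
  have st1 := kmw_st u v (by linear_combination hv)
  have st2 := kmw_st u⁻¹ w (by rw [hw]; linear_combination u.inv_mul)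
  have huwv : (-u) * w = v := by
    apply Units.ext
    rw [Units.val_mul, Units.val_neg, hw]
    linear_combination (1 - (u : R)) * u.mul_inv - hv
  have hXXi : Ideal.Quotient.mk (steinbergIdeal R) (MonoidAlgebra.of ℤ Rˣ u) *
      Ideal.Quotient.mk (steinbergIdeal R) (MonoidAlgebra.of ℤ Rˣ u⁻¹) = 1 := by
    rw [← map_mul, ← map_mul, show u * u⁻¹ = (1 : Rˣ) from mul_inv_cancel u, map_one, map_one]
  have hWinv : Ideal.Quotient.mk (steinbergIdeal R) (MonoidAlgebra.of ℤ Rˣ w) *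
      Ideal.Quotient.mk (steinbergIdeal R) (MonoidAlgebra.of ℤ Rˣ w⁻¹) = 1 := by
    rw [← map_mul, ← map_mul, show w * w⁻¹ = (1 : Rˣ) from mul_inv_cancel w, map_one, map_one]
  have hNW : Ideal.Quotient.mk (steinbergIdeal R) (MonoidAlgebra.of ℤ Rˣ (-u)) *
      Ideal.Quotient.mk (steinbergIdeal R) (MonoidAlgebra.of ℤ Rˣ w)
      = Ideal.Quotient.mk (steinbergIdeal R) (MonoidAlgebra.of ℤ Rˣ v) := by
    rw [← map_mul, ← map_mul, huwv]
  simp only [map_mul, map_sub, map_one] at st1 st2 ⊢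
  set X := Ideal.Quotient.mk (steinbergIdeal R) (MonoidAlgebra.of ℤ Rˣ u)
  set Xi := Ideal.Quotient.mk (steinbergIdeal R) (MonoidAlgebra.of ℤ Rˣ u⁻¹)
  set V := Ideal.Quotient.mk (steinbergIdeal R) (MonoidAlgebra.of ℤ Rˣ v)
  set W := Ideal.Quotient.mk (steinbergIdeal R) (MonoidAlgebra.of ℤ Rˣ w)
  set Wi := Ideal.Quotient.mk (steinbergIdeal R) (MonoidAlgebra.of ℤ Rˣ w⁻¹)
  set N := Ideal.Quotient.mk (steinbergIdeal R) (MonoidAlgebra.of ℤ Rˣ (-u))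
  have rW : (1 - X) * (1 - W) = 0 := by
    linear_combination (-X) * st2 + (W - 1) * hXXi
  linear_combination Wi * st1 + (-Wi) * rW + (-(Wi * (1 - X))) * hNW +
    (-((1 - X) * (1 - N))) * hWinv

private lemma kmw_one_sub_isUnit {R : Type*} [CommRing R] [IsLocalRing R] (u : Rˣ)
    (h : IsLocalRing.residue R (u : R) ≠ 1) : IsUnit (1 - (u : R)) := by
  have h0 : IsLocalRing.residue R (1 - (u : R)) ≠ 0 := by
    rw [map_sub, map_one]
    exact sub_ne_zero_of_ne (Ne.symm h)
  refine IsLocalRing.notMem_maximalIdeal.mp fun mem => h0 ?_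
  exact (IsLocalRing.residue_eq_zero_iff _).mpr mem

/-- Let `R` be a commutative local ring whose residue field is neither `𝔽₂` nor `𝔽₃`.
Then for all `a ∈ R*` the identities `⟨⟨a⟩⟩ ⬝ ⟨⟨-a⟩⟩ = 0` and `⟨⟨a²⟩⟩ = ⟨⟨a⟩⟩ ⬝ h` hold
in `K̃₀^MW(R)`. -/
theorem kmwTilde_identities (R : Type*) [CommRing R] [IsLocalRing R]
    (hF2 : Nat.card (IsLocalRing.ResidueField R) ≠ 2)
    (hF3 : Nat.card (IsLocalRing.ResidueField R) ≠ 3) (a : Rˣ) :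
    Ideal.Quotient.mk (steinbergIdeal R)
        ((1 - MonoidAlgebra.of ℤ Rˣ a) * (1 - MonoidAlgebra.of ℤ Rˣ (-a))) = 0 ∧
    Ideal.Quotient.mk (steinbergIdeal R) (1 - MonoidAlgebra.of ℤ Rˣ (a ^ 2)) =
      Ideal.Quotient.mk (steinbergIdeal R) ((1 - MonoidAlgebra.of ℤ Rˣ a) *
        (MonoidAlgebra.of ℤ Rˣ 1 + MonoidAlgebra.of ℤ Rˣ (-1))) := by
  have hneg : ∀ s : Rˣ, (-s : Rˣ) = (-1 : Rˣ) * s := fun s => Units.ext (by simp)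
  have hε : Ideal.Quotient.mk (steinbergIdeal R) (MonoidAlgebra.of ℤ Rˣ (-1)) *
      Ideal.Quotient.mk (steinbergIdeal R) (MonoidAlgebra.of ℤ Rˣ (-1)) = 1 := by
    rw [← map_mul, ← map_mul, show ((-1 : Rˣ) * (-1 : Rˣ)) = 1 from Units.ext (by simp),
      map_one, map_one]
  -- Part 1
  have part1 : Ideal.Quotient.mk (steinbergIdeal R)
      ((1 - MonoidAlgebra.of ℤ Rˣ a) * (1 - MonoidAlgebra.of ℤ Rˣ (-a))) = 0 := by
    by_cases hU : IsUnit (1 - (a : R))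
    · exact kmw_caseA a hU
    · -- the residue of a is 1
      have hres : IsLocalRing.residue R (a : R) = 1 := by
        have hmem : (1 : R) - (a : R) ∈ IsLocalRing.maximalIdeal R :=
          (IsLocalRing.mem_maximalIdeal _).mpr (mem_nonunits_iff.mpr hU)
        have h0 := (IsLocalRing.residue_eq_zero_iff _).mpr hmem
        rw [map_sub, map_one, sub_eq_zero] at h0
        exact h0.symm
      -- find a residue element different from 0, 1, -1
      obtain ⟨β, hβ0, hβ1, hβn1⟩ :
          ∃ β : IsLocalRing.ResidueField R, β ≠ 0 ∧ β ≠ 1 ∧ β ≠ -1 := by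
        by_contra hcon
        push_neg at hcon
        have hsub : (Set.univ : Set (IsLocalRing.ResidueField R)) ⊆ {0, 1, -1} := by
          intro β _
          simp only [Set.mem_insert_iff, Set.mem_singleton_iff]
          rcases eq_or_ne β 0 with h | h
          · exact Or.inl h
          rcases eq_or_ne β 1 with h' | h'
          · exact Or.inr (Or.inl h')
          · exact Or.inr (Or.inr (hcon β h h'))
        have hfin : ({0, 1, -1} : Set (IsLocalRing.ResidueField R)).Finite :=
          ((Set.finite_singleton _).insert _).insert _
        have hcard : Nat.card (IsLocalRing.ResidueField R) ≤ 3 := by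
          rw [← Set.ncard_univ]
          calc (Set.univ : Set (IsLocalRing.ResidueField R)).ncard
              ≤ ({0, 1, -1} : Set (IsLocalRing.ResidueField R)).ncard :=
                Set.ncard_le_ncard hsub hfin
            _ ≤ 3 := by
                refine le_trans (Set.ncard_insert_le _ _) ?_
                have h1 := Set.ncard_insert_le (1 : IsLocalRing.ResidueField R)
                  ({-1} : Set (IsLocalRing.ResidueField R))
                have h2 := Set.ncard_singleton (-1 : IsLocalRing.ResidueField R)
                omega
        haveI : Finite (IsLocalRing.ResidueField R) :=
          Set.finite_univ_iff.mp (hfin.subset hsub)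
        have h2 : 1 < Nat.card (IsLocalRing.ResidueField R) := Finite.one_lt_card
        omega
      obtain ⟨r, hr⟩ := IsLocalRing.residue_surjective (R := R) β
      have hrU : IsUnit r := by
        refine IsLocalRing.notMem_maximalIdeal.mp fun mem => hβ0 ?_
        rw [← hr]
        exact (IsLocalRing.residue_eq_zero_iff _).mpr mem
      set b : Rˣ := hrU.unit with hbdef
      have hbval : (b : R) = r := hrU.unit_spec
      have hrb : IsLocalRing.residue R (b : R) = β := by rw [hbval, hr]
      set c : Rˣ := b⁻¹ * a with hcdef
      set d : Rˣ := b⁻¹ * c with hddef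
      have hcb : c * b = a := by
        rw [hcdef, mul_comm b⁻¹ a]; exact inv_mul_cancel_right a b
      have hdb : d * b = c := by
        rw [hddef, mul_comm b⁻¹ c]; exact inv_mul_cancel_right c b
      have hrescβ : IsLocalRing.residue R (c : R) * β = 1 := by
        have := congrArg (fun t : Rˣ => IsLocalRing.residue R (t : R)) hcb
        simpa [Units.val_mul, map_mul, hrb, hres] using this
      have hrc : IsLocalRing.residue R (c : R) ≠ 1 := by
        intro h1
        rw [h1, one_mul] at hrescβ
        exact hβ1 hrescβ
      have hrd : IsLocalRing.residue R (d : R) ≠ 1 := by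
        intro h1
        have hh := congrArg (fun t : Rˣ => IsLocalRing.residue R (t : R)) hdb
        simp only [Units.val_mul, map_mul, hrb, h1, one_mul] at hh
        rw [← hh] at hrescβ
        have hzero : (β - 1) * (β + 1) = 0 := by linear_combination hrescβ
        rcases mul_eq_zero.mp hzero with h | h
        · exact hβ1 (by linear_combination h)
        · exact hβn1 (by linear_combination h)
      have hrbne1 : IsLocalRing.residue R (b : R) ≠ 1 := by rw [hrb]; exact hβ1
      have k1 := kmw_caseA b (kmw_one_sub_isUnit b hrbne1)
      have k2 := kmw_caseA c (kmw_one_sub_isUnit c hrc)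
      have k3 := kmw_caseA d (kmw_one_sub_isUnit d hrd)
      have hofneg : ∀ s : Rˣ, Ideal.Quotient.mk (steinbergIdeal R)
            (MonoidAlgebra.of ℤ Rˣ (-s))
          = Ideal.Quotient.mk (steinbergIdeal R) (MonoidAlgebra.of ℤ Rˣ (-1)) *
            Ideal.Quotient.mk (steinbergIdeal R) (MonoidAlgebra.of ℤ Rˣ s) := by
        intro s
        rw [hneg s, map_mul, map_mul]
      have hxz : Ideal.Quotient.mk (steinbergIdeal R) (MonoidAlgebra.of ℤ Rˣ b) *
          Ideal.Quotient.mk (steinbergIdeal R) (MonoidAlgebra.of ℤ Rˣ d)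
          = Ideal.Quotient.mk (steinbergIdeal R) (MonoidAlgebra.of ℤ Rˣ c) := by
        rw [← map_mul, ← map_mul, show b * d = c from by rw [hddef]; exact mul_inv_cancel_left b c]
      have hxy : Ideal.Quotient.mk (steinbergIdeal R) (MonoidAlgebra.of ℤ Rˣ a)
          = Ideal.Quotient.mk (steinbergIdeal R) (MonoidAlgebra.of ℤ Rˣ b) *
            Ideal.Quotient.mk (steinbergIdeal R) (MonoidAlgebra.of ℤ Rˣ c) := by
        rw [← map_mul, ← map_mul, show b * c = a from by rw [hcdef]; exact mul_inv_cancel_left b a]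
      rw [hneg b] at k1
      rw [hneg c] at k2
      rw [hneg d] at k3
      rw [hneg a]
      simp only [map_mul, map_sub, map_one] at k1 k2 k3 ⊢
      set ε := Ideal.Quotient.mk (steinbergIdeal R) (MonoidAlgebra.of ℤ Rˣ (-1))
      set x := Ideal.Quotient.mk (steinbergIdeal R) (MonoidAlgebra.of ℤ Rˣ b)
      set y := Ideal.Quotient.mk (steinbergIdeal R) (MonoidAlgebra.of ℤ Rˣ c)
      set z := Ideal.Quotient.mk (steinbergIdeal R) (MonoidAlgebra.of ℤ Rˣ d)
      have h3 : (x - y) * (x - ε * y) = 0 := by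
        linear_combination x ^ 2 * k3 + ((1 + ε) * x - ε * (y + x * z)) * hxz
      have final := kmw_ring_key x y ε hε k1 k2 h3
      rw [hxy]
      linear_combination final
  refine ⟨part1, ?_⟩
  -- Part 2
  have part1' : (1 - Ideal.Quotient.mk (steinbergIdeal R) (MonoidAlgebra.of ℤ Rˣ a)) *
      (1 - Ideal.Quotient.mk (steinbergIdeal R) (MonoidAlgebra.of ℤ Rˣ (-1)) *
        Ideal.Quotient.mk (steinbergIdeal R) (MonoidAlgebra.of ℤ Rˣ a)) = 0 := by
    have h := part1
    rw [hneg a, map_mul] at h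
    simpa only [map_mul, map_sub, map_one] using h
  have hsq : Ideal.Quotient.mk (steinbergIdeal R) (MonoidAlgebra.of ℤ Rˣ (a ^ 2))
      = Ideal.Quotient.mk (steinbergIdeal R) (MonoidAlgebra.of ℤ Rˣ a) *
        Ideal.Quotient.mk (steinbergIdeal R) (MonoidAlgebra.of ℤ Rˣ a) := by
    rw [sq, map_mul, map_mul]
  simp only [map_mul, map_sub, map_add, map_one, hsq]
  set X := Ideal.Quotient.mk (steinbergIdeal R) (MonoidAlgebra.of ℤ Rˣ a)
  set ε := Ideal.Quotient.mk (steinbergIdeal R) (MonoidAlgebra.of ℤ Rˣ (-1))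
  linear_combination (-ε) * part1' + (X ^ 2 - X) * hε
end
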